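/- arXiv:1101.1760 — 5 statements merged into one kernel-verified Lean document; each statement's English description precedes it below -/
import Mathlib

section
/- Remark 5.6 (relation between the FA-1f interface energies). Fix ρ∈(0,1). Let Σ₁ = lim_{L→∞} lim_{L'→∞} Σ_{L,L'} be the interface energy defined with the Dirichlet form of the FA-1f model with two empty boundaries, and let Σ₂ = lim_{L→∞} Σ_L be the interface energy defined with the Dirichlet form of the FA-1f model with one empty (right) boundary. Then Σ₁ = 2Σ₂. -/
open Finset Filter

open scoped Classical

/-- A configuration on the box `{1,…,N}` (0-indexed by `Fin N`). -/
abbrev Config (N : ℕ) := Fin N → Bool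

/-- Occupation variable `η_i ∈ {0,1}` as a real number. -/
noncomputable def occ {N : ℕ} (η : Config N) (i : Fin N) : ℝ := if η i then 1 else 0

/-- Bernoulli(ρ) product weight of a configuration. -/
noncomputable def bern (ρ : ℝ) {N : ℕ} (η : Config N) : ℝ :=
  ∏ i, (if η i then ρ else 1 - ρ)

/-- Expectation under the Bernoulli(ρ) product measure `ν`. -/
noncomputable def expect (ρ : ℝ) {N : ℕ} (f : Config N → ℝ) : ℝ :=
  ∑ η : Config N, bern ρ η * f η

/-- The configuration `η^i`, obtained by flipping `η` at site `i`. -/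
def flipAt {N : ℕ} (η : Config N) (i : Fin N) : Config N :=
  Function.update η i (!η i)

/-- Occupation at the 1-indexed position `k ∈ {0,…,N+1}`, with boundary value
`bl` at `k = 0` and `br` at `k = N+1` (and beyond). -/
noncomputable def occAt {N : ℕ} (η : Config N) (bl br : ℝ) (k : ℕ) : ℝ :=
  if hk : k = 0 then bl
  else if h : k ≤ N then (if η ⟨k - 1, by omega⟩ then 1 else 0) else br

/-- The three kinetically constrained models considered: East (empty right boundary),
FA-1f with two empty boundaries, FA-1f with one empty (right) boundary. -/
inductive KCM | east | fa2 | fa1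

/-- The kinetic constraint `r_i(η)` of each model, at the (0-indexed) site `i`. -/
noncomputable def constr (m : KCM) {N : ℕ} (η : Config N) (i : Fin N) : ℝ :=
  match m with
  | KCM.east => 1 - occAt η 0 0 (i.1 + 2)
  | KCM.fa2  => 1 - occAt η 0 0 i.1 * occAt η 0 0 (i.1 + 2)
  | KCM.fa1  => 1 - occAt η 1 0 i.1 * occAt η 1 0 (i.1 + 2)

/-- The jump rate `c_i(η) = r_i(η)·[η_i(1−ρ)+(1−η_i)ρ]`. -/
noncomputable def crate (m : KCM) (ρ : ℝ) {N : ℕ} (η : Config N) (i : Fin N) : ℝ :=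
  constr m η i * (if η i then 1 - ρ else ρ)

/-- The escape rate `𝓗(η) = Σ_i c_i(η)`. -/
noncomputable def escRate (m : KCM) (ρ : ℝ) {N : ℕ} (η : Config N) : ℝ :=
  ∑ i, crate m ρ η i

/-- The Dirichlet form `𝒟_N(g) = Σ_i ν(c_i(η)(g(η^i)−g(η))²)`. -/
noncomputable def dirichlet (m : KCM) (ρ : ℝ) {N : ℕ} (g : Config N → ℝ) : ℝ :=
  ∑ i, expect ρ (fun η => crate m ρ η i * (g (flipAt η i) - g η) ^ 2)

/-- The rescaled cumulant generating function `φ^{(N)}(λ)`, via the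
Donsker–Varadhan variational (principal eigenvalue) formula. -/
noncomputable def phi (m : KCM) (ρ : ℝ) (N : ℕ) (lam : ℝ) : ℝ :=
  sSup { x | ∃ f : Config N → ℝ, (∀ η, 0 ≤ f η) ∧ expect ρ f = 1 ∧
    x = (Real.exp lam - 1) * expect ρ (fun η => f η * escRate m ρ η)
        - Real.exp lam * dirichlet m ρ (fun η => Real.sqrt (f η)) }

/-- The mean instantaneous activity `𝔸 = ν(c_j)` at an interior site `j`:
`2ρ(1−ρ)²` for East and `2ρ(1−ρ)(1−ρ²)` for FA-1f. -/
noncomputable def meanAct (m : KCM) (ρ : ℝ) : ℝ :=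
  match m with
  | KCM.east => 2 * ρ * (1 - ρ) ^ 2
  | _ => 2 * ρ * (1 - ρ) * (1 - ρ ^ 2)

/-- The two-boundary interface energy `Σ_{L,L'}` for FA-1f with two empty
boundaries: the infimum of `𝒟_{L+L'+2}(√f)` over probability densities `f`
with `ν(f·η_{L+1}η_{L+2}) = 1`. -/
noncomputable def SigmaTwo (ρ : ℝ) (L L' : ℕ) : ℝ :=
  sInf { x | ∃ f : Config (L + L' + 2) → ℝ, (∀ η, 0 ≤ f η) ∧ expect ρ f = 1 ∧
    expect ρ (fun η => f η * occ η ⟨L, by omega⟩ * occ η ⟨L + 1, by omega⟩) = 1 ∧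
    x = dirichlet KCM.fa2 ρ (fun η => Real.sqrt (f η)) }

/-- The one-boundary interface energy `Σ_L`: the infimum of `𝒟_L(√f)`
over probability densities `f` with `ν(f·η_1) = 1`, for the model `m`. -/
noncomputable def SigmaOne (m : KCM) (ρ : ℝ) (L : ℕ) : ℝ :=
  sInf { x | ∃ f : Config L → ℝ, (∀ η, 0 ≤ f η) ∧ expect ρ f = 1 ∧
    expect ρ (fun η => f η * occAt η 0 0 1) = 1 ∧
    x = dirichlet m ρ (fun η => Real.sqrt (f η)) }

/-!
On densities supported by `η_{L+1} = η_{L+2} = 1` the two occupied sites decouple the box: read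
outward from the cut, each half is the FA-1f chain with an occupied boundary at the cut and an
empty one at the far end, i.e. the one-boundary model. Hence `Σ_{L,L'} = Σ_{L+1} + Σ_{L'+1}`: for a
product of admissible densities the Dirichlet form splits exactly, and conversely the Dirichlet
form of an admissible density dominates the sum of those of its two marginals, by convexity of
`(x, y) ↦ (√x - √y)²` and because the one-boundary rates are bounded by the two-boundary ones.
Letting `L' → ∞` and then `L → ∞` gives `Σ₁ = 2 Σ₂`.
-/

section Positivity
variable {ρ : ℝ} {N : ℕ}

lemma bern_pos (h0 : 0 < ρ) (h1 : ρ < 1) (η : Config N) : 0 < bern ρ η :=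
  prod_pos fun i _ => by split <;> linarith

lemma bern_nonneg (h0 : 0 ≤ ρ) (h1 : ρ ≤ 1) (η : Config N) : 0 ≤ bern ρ η :=
  prod_nonneg fun i _ => by split <;> linarith

lemma expect_nonneg (h0 : 0 ≤ ρ) (h1 : ρ ≤ 1) {f : Config N → ℝ} (hf : ∀ η, 0 ≤ f η) :
    0 ≤ expect ρ f :=
  sum_nonneg fun η _ => mul_nonneg (bern_nonneg h0 h1 η) (hf η)

lemma occ_nonneg (η : Config N) (i : Fin N) : 0 ≤ occ η i := by
  unfold occ; split <;> norm_num

lemma occ_le_one (η : Config N) (i : Fin N) : occ η i ≤ 1 := by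
  unfold occ; split <;> norm_num

lemma occAt_nonneg (η : Config N) {bl br : ℝ} (hbl : 0 ≤ bl) (hbr : 0 ≤ br) (k : ℕ) :
    0 ≤ occAt η bl br k := by
  unfold occAt; split_ifs <;> norm_num [*]

lemma occAt_le_one (η : Config N) {bl br : ℝ} (hbl : bl ≤ 1) (hbr : br ≤ 1) (k : ℕ) :
    occAt η bl br k ≤ 1 := by
  unfold occAt; split_ifs <;> norm_num [*]

lemma occAt_mono_left (η : Config N) {bl bl' : ℝ} (h : bl ≤ bl') (br : ℝ) (k : ℕ) :
    occAt η bl br k ≤ occAt η bl' br k := by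
  unfold occAt; split_ifs <;> simp [h]

lemma constr_nonneg (m : KCM) (η : Config N) (i : Fin N) : 0 ≤ constr m η i := by
  have key : ∀ {bl} k l, 0 ≤ bl → bl ≤ 1 → 0 ≤ 1 - occAt η bl 0 k * occAt η bl 0 l :=
    fun k l h0 h1 => sub_nonneg.2 <| mul_le_one₀ (occAt_le_one η h1 zero_le_one k)
      (occAt_nonneg η h0 le_rfl l) (occAt_le_one η h1 zero_le_one l)
  cases m
  · exact sub_nonneg.2 (occAt_le_one η zero_le_one zero_le_one _)
  · exact key _ _ le_rfl zero_le_one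
  · exact key _ _ zero_le_one le_rfl

lemma crate_nonneg (m : KCM) (h0 : 0 ≤ ρ) (h1 : ρ ≤ 1) (η : Config N) (i : Fin N) :
    0 ≤ crate m ρ η i :=
  mul_nonneg (constr_nonneg m η i) (by split <;> linarith)

lemma dirichlet_nonneg (m : KCM) (h0 : 0 ≤ ρ) (h1 : ρ ≤ 1) (g : Config N → ℝ) :
    0 ≤ dirichlet m ρ g :=
  sum_nonneg fun i _ => expect_nonneg h0 h1 fun η =>
    mul_nonneg (crate_nonneg m h0 h1 η i) (sq_nonneg _)

end Positivity

/-- Triangle inequality in `L²(p)` for the vectors `(√(p i x i))` and `(√(p i y i))`. -/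
lemma sq_sqrt_sum_sub_sqrt_sum_le {ι : Type*} [Fintype ι] (p x y : ι → ℝ)
    (hp : ∀ i, 0 ≤ p i) (hx : ∀ i, 0 ≤ x i) (hy : ∀ i, 0 ≤ y i) :
    (√(∑ i, p i * x i) - √(∑ i, p i * y i)) ^ 2 ≤ ∑ i, p i * (√(x i) - √(y i)) ^ 2 := by
  let u : EuclideanSpace ℝ ι := WithLp.toLp 2 fun i => √(p i) * √(x i)
  let v : EuclideanSpace ℝ ι := WithLp.toLp 2 fun i => √(p i) * √(y i)
  have norm_u : ‖u‖ = √(∑ i, p i * x i) := by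
    simp [u, EuclideanSpace.norm_eq, mul_pow, Real.sq_sqrt (hp _), Real.sq_sqrt (hx _)]
  have norm_v : ‖v‖ = √(∑ i, p i * y i) := by
    simp [v, EuclideanSpace.norm_eq, mul_pow, Real.sq_sqrt (hp _), Real.sq_sqrt (hy _)]
  have norm_sub : ‖u - v‖ ^ 2 = ∑ i, p i * (√(x i) - √(y i)) ^ 2 := by
    simp [u, v, EuclideanSpace.norm_sq_eq, ← mul_sub, mul_pow, Real.sq_sqrt (hp _)]
  rw [← norm_u, ← norm_v, ← norm_sub, ← sq_abs]
  exact pow_le_pow_left₀ (abs_nonneg _) (abs_norm_sub_norm_le u v) 2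

section ProductSums
variable {α β : Type*} [Fintype α] [Fintype β] {p : α → ℝ} {q : β → ℝ} {c : α → ℝ}
  {C : α → β → ℝ}

/-- Averaging out `b` can only lower a one-site Dirichlet term. -/
lemma sum_sq_sqrt_marginal_le (hp : ∀ a, 0 ≤ p a) (hq : ∀ b, 0 ≤ q b) (hc : ∀ a, 0 ≤ c a)
    (hcC : ∀ a b, c a ≤ C a b) (σ : α → α) {F : α → β → ℝ} (hF : ∀ a b, 0 ≤ F a b) :
    ∑ a, p a * (c a * (√(∑ b, q b * F (σ a) b) - √(∑ b, q b * F a b)) ^ 2)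
      ≤ ∑ a, ∑ b, p a * q b * (C a b * (√(F (σ a) b) - √(F a b)) ^ 2) := by
  refine sum_le_sum fun a _ => ?_
  calc p a * (c a * (√(∑ b, q b * F (σ a) b) - √(∑ b, q b * F a b)) ^ 2)
      ≤ p a * (c a * ∑ b, q b * (√(F (σ a) b) - √(F a b)) ^ 2) := by
        gcongr
        · exact hp a
        · exact hc a
        · exact sq_sqrt_sum_sub_sqrt_sum_le q _ _ hq (hF _) (hF a)
    _ = ∑ b, p a * q b * (c a * (√(F (σ a) b) - √(F a b)) ^ 2) := by
        rw [mul_sum, mul_sum]; exact sum_congr rfl fun b _ => by ring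
    _ ≤ ∑ b, p a * q b * (C a b * (√(F (σ a) b) - √(F a b)) ^ 2) := by
        gcongr with b
        · exact mul_nonneg (hp a) (hq b)
        · exact hcC a b

lemma sum_sq_sqrt_mul_eq (σ : α → α) {g : α → ℝ} {h : β → ℝ} (hg : ∀ a, 0 ≤ g a)
    (hh : ∀ b, 0 ≤ h b) (hC : ∀ a b, h b ≠ 0 → C a b = c a) (hqh : ∑ b, q b * h b = 1) :
    ∑ a, ∑ b, p a * q b * (C a b * (√(g (σ a) * h b) - √(g a * h b)) ^ 2)
      = ∑ a, p a * (c a * (√(g (σ a)) - √(g a)) ^ 2) := by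
  refine sum_congr rfl fun a _ => ?_
  have term : ∀ b, p a * q b * (C a b * (√(g (σ a) * h b) - √(g a * h b)) ^ 2)
      = p a * (c a * (√(g (σ a)) - √(g a)) ^ 2) * (q b * h b) := fun b => by
    rw [Real.sqrt_mul (hg _), Real.sqrt_mul (hg _), ← sub_mul, mul_pow, Real.sq_sqrt (hh b)]
    rcases eq_or_ne (h b) 0 with hb | hb
    · simp [hb]
    · rw [hC a b hb]; ring
  rw [sum_congr rfl fun b _ => term b, ← mul_sum, hqh, mul_one]

end ProductSums

section Expectation
variable {ρ : ℝ} {N : ℕ}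

lemma expect_mono (h0 : 0 ≤ ρ) (h1 : ρ ≤ 1) {F G : Config N → ℝ} (h : ∀ η, F η ≤ G η) :
    expect ρ F ≤ expect ρ G :=
  sum_le_sum fun η _ => mul_le_mul_of_nonneg_left (h η) (bern_nonneg h0 h1 η)

lemma expect_mul_eq_one_of_le (h0 : 0 ≤ ρ) (h1 : ρ ≤ 1) {f w w' : Config N → ℝ}
    (hf : ∀ η, 0 ≤ f η) (hww' : ∀ η, w η ≤ w' η) (hw' : ∀ η, w' η ≤ 1) (hE : expect ρ f = 1)
    (hw : expect ρ (fun η => f η * w η) = 1) :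
    expect ρ (fun η => f η * w' η) = 1 :=
  le_antisymm
    (hE ▸ expect_mono h0 h1 fun η => mul_le_of_le_one_right (hf η) (hw' η))
    (hw ▸ expect_mono h0 h1 fun η => mul_le_mul_of_nonneg_left (hww' η) (hf η))

lemma mul_eq_self_of_expect_mul_eq_one (h0 : 0 < ρ) (h1 : ρ < 1) {f w : Config N → ℝ}
    (hf : ∀ η, 0 ≤ f η) (hw : ∀ η, w η ≤ 1) (hE : expect ρ f = 1)
    (hEw : expect ρ (fun η => f η * w η) = 1) (η : Config N) : f η * w η = f η := by
  have hsum : ∑ η, bern ρ η * (f η * (1 - w η)) = 0 := by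
    simp only [mul_sub, mul_one, sum_sub_distrib]
    exact sub_eq_zero.2 (hE.trans hEw.symm)
  have hη := (sum_eq_zero_iff_of_nonneg fun η _ => mul_nonneg (bern_nonneg h0.le h1.le η)
    (mul_nonneg (hf η) (sub_nonneg.2 (hw η)))).1 hsum η (mem_univ η)
  rcases mul_eq_zero.1 ((mul_eq_zero.1 hη).resolve_left (bern_pos h0 h1 η).ne') with h | h
  · simp [h]
  · rw [← sub_eq_zero.1 h, mul_one]

lemma exists_expect_eq_one_of_idempotent (h0 : 0 < ρ) (h1 : ρ < 1) {w : Config N → ℝ}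
    (hw0 : ∀ η, 0 ≤ w η) (hww : ∀ η, w η * w η = w η) {η₀ : Config N} (hη₀ : w η₀ ≠ 0) :
    ∃ f : Config N → ℝ, (∀ η, 0 ≤ f η) ∧ expect ρ f = 1 ∧ expect ρ (fun η => f η * w η) = 1 := by
  have hpos : 0 < expect ρ w :=
    sum_pos' (fun η _ => mul_nonneg (bern_nonneg h0.le h1.le η) (hw0 η))
      ⟨η₀, mem_univ _, mul_pos (bern_pos h0 h1 η₀) ((hw0 η₀).lt_of_ne' hη₀)⟩
  have hdiv : expect ρ (fun η => w η / expect ρ w) = 1 := by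
    simp only [_root_.expect, mul_div_assoc', ← sum_div]
    exact div_self hpos.ne'
  refine ⟨fun η => w η / expect ρ w, fun η => div_nonneg (hw0 η) hpos.le, hdiv, ?_⟩
  simpa only [div_mul_eq_mul_div, hww] using hdiv

end Expectation

section Splitting
variable {L L' : ℕ}

/-- The box `{1,…,L+L'+2}` cut between the sites `L+1` and `L+2`; each half is read outward from
the cut, so that in both halves the site next to the cut is the site `0`. -/
def siteSplit (L L' : ℕ) : Fin (L + 1) ⊕ Fin (L' + 1) ≃ Fin (L + L' + 2) :=
  (Equiv.sumCongr Fin.revPerm (Equiv.refl _)).trans (finSumFinEquiv.trans (finCongr (by omega)))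

@[simp] lemma siteSplit_inl_val (j : Fin (L + 1)) : (siteSplit L L' (.inl j)).1 = L - j.1 := by
  simp [siteSplit, Fin.val_rev]

@[simp] lemma siteSplit_inr_val (j : Fin (L' + 1)) :
    (siteSplit L L' (.inr j)).1 = L + 1 + j.1 := by
  simp [siteSplit]

def configSplit (L L' : ℕ) : Config (L + 1) × Config (L' + 1) ≃ Config (L + L' + 2) :=
  (Equiv.sumArrowEquivProdArrow _ _ _).symm.trans (Equiv.arrowCongr (siteSplit L L') (.refl _))

@[simp] lemma configSplit_inl (a : Config (L + 1)) (b : Config (L' + 1)) (j : Fin (L + 1)) :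
    configSplit L L' (a, b) (siteSplit L L' (.inl j)) = a j := by
  simp [configSplit]

@[simp] lemma configSplit_inr (a : Config (L + 1)) (b : Config (L' + 1)) (j : Fin (L' + 1)) :
    configSplit L L' (a, b) (siteSplit L L' (.inr j)) = b j := by
  simp [configSplit]

lemma flipAt_configSplit_inl (a : Config (L + 1)) (b : Config (L' + 1)) (j : Fin (L + 1)) :
    flipAt (configSplit L L' (a, b)) (siteSplit L L' (.inl j))
      = configSplit L L' (flipAt a j, b) := by
  ext i
  obtain ⟨s, rfl⟩ := (siteSplit L L').surjective i
  rcases s with k | k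
  · by_cases hk : k = j <;> simp [flipAt, configSplit, Function.update_apply, hk]
  · simp [flipAt, configSplit]

lemma flipAt_configSplit_inr (a : Config (L + 1)) (b : Config (L' + 1)) (j : Fin (L' + 1)) :
    flipAt (configSplit L L' (a, b)) (siteSplit L L' (.inr j))
      = configSplit L L' (a, flipAt b j) := by
  ext i
  obtain ⟨s, rfl⟩ := (siteSplit L L').surjective i
  rcases s with k | k
  · simp [flipAt, configSplit]
  · by_cases hk : k = j <;> simp [flipAt, configSplit, Function.update_apply, hk]

lemma bern_configSplit (ρ : ℝ) (a : Config (L + 1)) (b : Config (L' + 1)) :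
    bern ρ (configSplit L L' (a, b)) = bern ρ a * bern ρ b := by
  rw [bern, ← (siteSplit L L').prod_comp, Fintype.prod_sum_type]
  simp [bern]

lemma expect_eq_sum_configSplit (ρ : ℝ) (F : Config (L + L' + 2) → ℝ) :
    expect ρ F = ∑ a, ∑ b, bern ρ a * bern ρ b * F (configSplit L L' (a, b)) := by
  rw [_root_.expect, ← (configSplit L L').sum_comp, Fintype.sum_prod_type]
  simp [bern_configSplit]

end Splitting

section Constraints
variable {ρ : ℝ} {N L L' : ℕ}

lemma configSplit_apply_of_le (a : Config (L + 1)) (b : Config (L' + 1)) {k : ℕ} (hk : k ≤ L) :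
    configSplit L L' (a, b) ⟨k, by omega⟩ = a ⟨L - k, by omega⟩ := by
  rw [← configSplit_inl a b ⟨L - k, by omega⟩]
  exact congrArg _ (Fin.ext (by simp; omega))

lemma configSplit_apply_of_lt (a : Config (L + 1)) (b : Config (L' + 1)) {k : ℕ} (hk : L < k)
    (hk' : k < L + L' + 2) :
    configSplit L L' (a, b) ⟨k, hk'⟩ = b ⟨k - (L + 1), by omega⟩ := by
  rw [← configSplit_inr a b ⟨k - (L + 1), by omega⟩]
  exact congrArg _ (Fin.ext (by simp; omega))

/-- Seen from the left half, the right neighbour of the cut acts as its left boundary. -/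
lemma occAt_configSplit_left (a : Config (L + 1)) (b : Config (L' + 1)) {k : ℕ} (hk : k ≤ L + 2) :
    occAt (configSplit L L' (a, b)) 0 0 k = occAt a (occ b 0) 0 (L + 2 - k) := by
  rcases Nat.lt_or_ge (L + 1) k with hk1 | hk1
  · obtain rfl : k = L + 2 := by omega
    simp [occAt, occ, configSplit_apply_of_lt a b (show L < L + 1 by omega)]
  · rcases Nat.eq_zero_or_pos k with rfl | hk0
    · simp [occAt]
    · simp [occAt, show k ≠ 0 by omega, show k ≤ L + L' + 2 by omega, show L + 2 - k ≠ 0 by omega,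
        show L + 2 - k ≤ L + 1 by omega, configSplit_apply_of_le a b (show k - 1 ≤ L by omega),
        show L - (k - 1) = L + 2 - k - 1 by omega]

lemma occAt_configSplit_right (a : Config (L + 1)) (b : Config (L' + 1)) {k : ℕ}
    (hk : L + 1 ≤ k) :
    occAt (configSplit L L' (a, b)) 0 0 k = occAt b (occ a 0) 0 (k - (L + 1)) := by
  rcases Nat.lt_or_ge (L + 1) k with hk1 | hk1
  · rcases Nat.lt_or_ge (L + L' + 2) k with hk2 | hk2
    · simp [occAt, show k ≠ 0 by omega, show ¬ k ≤ L + L' + 2 by omega,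
        show k - (L + 1) ≠ 0 by omega, show ¬ k - (L + 1) ≤ L' + 1 by omega]
    · simp [occAt, show k ≠ 0 by omega, hk2, show k - (L + 1) ≠ 0 by omega,
        show k - (L + 1) ≤ L' + 1 by omega,
        configSplit_apply_of_lt a b (show L < k - 1 by omega),
        show k - 1 - (L + 1) = k - (L + 1) - 1 by omega]
  · obtain rfl : k = L + 1 := by omega
    simp [occAt, occ, configSplit_apply_of_le a b (le_refl L), show L + 1 ≤ L + L' + 2 by omega]

lemma constr_fa1_le (η : Config N) {bl : ℝ} (h0 : 0 ≤ bl) (h1 : bl ≤ 1) (i : Fin N) :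
    constr KCM.fa1 η i ≤ 1 - occAt η bl 0 i.1 * occAt η bl 0 (i.1 + 2) :=
  sub_le_sub_left (mul_le_mul (occAt_mono_left η h1 0 _) (occAt_mono_left η h1 0 _)
    (occAt_nonneg η h0 le_rfl _) (occAt_nonneg η zero_le_one le_rfl _)) 1

lemma constr_fa2_configSplit_inl (a : Config (L + 1)) (b : Config (L' + 1)) (j : Fin (L + 1)) :
    constr KCM.fa2 (configSplit L L' (a, b)) (siteSplit L L' (.inl j))
      = 1 - occAt a (occ b 0) 0 j.1 * occAt a (occ b 0) 0 (j.1 + 2) := by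
  simp only [constr, siteSplit_inl_val]
  rw [occAt_configSplit_left a b (by omega), occAt_configSplit_left a b (by omega),
    show L + 2 - (L - j.1) = j.1 + 2 by omega, show L + 2 - (L - j.1 + 2) = j.1 by omega, mul_comm]

lemma constr_fa2_configSplit_inr (a : Config (L + 1)) (b : Config (L' + 1)) (j : Fin (L' + 1)) :
    constr KCM.fa2 (configSplit L L' (a, b)) (siteSplit L L' (.inr j))
      = 1 - occAt b (occ a 0) 0 j.1 * occAt b (occ a 0) 0 (j.1 + 2) := by
  simp only [constr, siteSplit_inr_val]
  rw [occAt_configSplit_right a b (by omega), occAt_configSplit_right a b (by omega),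
    show L + 1 + j.1 - (L + 1) = j.1 by omega, show L + 1 + j.1 + 2 - (L + 1) = j.1 + 2 by omega]

lemma crate_fa1_le_configSplit_inl (h0 : 0 ≤ ρ) (h1 : ρ ≤ 1) (a : Config (L + 1))
    (b : Config (L' + 1)) (j : Fin (L + 1)) :
    crate KCM.fa1 ρ a j ≤ crate KCM.fa2 ρ (configSplit L L' (a, b)) (siteSplit L L' (.inl j)) := by
  rw [crate, crate, constr_fa2_configSplit_inl, configSplit_inl]
  exact mul_le_mul_of_nonneg_right (constr_fa1_le a (occ_nonneg b 0) (occ_le_one b 0) j)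
    (by split <;> linarith)

lemma crate_fa1_le_configSplit_inr (h0 : 0 ≤ ρ) (h1 : ρ ≤ 1) (a : Config (L + 1))
    (b : Config (L' + 1)) (j : Fin (L' + 1)) :
    crate KCM.fa1 ρ b j ≤ crate KCM.fa2 ρ (configSplit L L' (a, b)) (siteSplit L L' (.inr j)) := by
  rw [crate, crate, constr_fa2_configSplit_inr, configSplit_inr]
  exact mul_le_mul_of_nonneg_right (constr_fa1_le b (occ_nonneg a 0) (occ_le_one a 0) j)
    (by split <;> linarith)

lemma crate_configSplit_inl_of_occupied (a : Config (L + 1)) {b : Config (L' + 1)} (hb : b 0)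
    (j : Fin (L + 1)) :
    crate KCM.fa2 ρ (configSplit L L' (a, b)) (siteSplit L L' (.inl j)) = crate KCM.fa1 ρ a j := by
  rw [crate, crate, constr_fa2_configSplit_inl, configSplit_inl, occ, if_pos hb]
  rfl

lemma crate_configSplit_inr_of_occupied {a : Config (L + 1)} (ha : a 0) (b : Config (L' + 1))
    (j : Fin (L' + 1)) :
    crate KCM.fa2 ρ (configSplit L L' (a, b)) (siteSplit L L' (.inr j)) = crate KCM.fa1 ρ b j := by
  rw [crate, crate, constr_fa2_configSplit_inr, configSplit_inr, occ, if_pos ha]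
  rfl

end Constraints

section Marginals
variable {ρ : ℝ} {L L' : ℕ}

lemma dirichlet_eq_sum_siteSplit (m : KCM) (ρ : ℝ) (g : Config (L + L' + 2) → ℝ) :
    dirichlet m ρ g
      = ∑ j, expect ρ (fun η => crate m ρ η (siteSplit L L' (.inl j))
            * (g (flipAt η (siteSplit L L' (.inl j))) - g η) ^ 2)
        + ∑ j, expect ρ (fun η => crate m ρ η (siteSplit L L' (.inr j))
            * (g (flipAt η (siteSplit L L' (.inr j))) - g η) ^ 2) := by
  rw [dirichlet, ← (siteSplit L L').sum_comp, Fintype.sum_sum_type]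

lemma expect_crate_inl_eq_sum (m : KCM) (g : Config (L + L' + 2) → ℝ) (j : Fin (L + 1)) :
    expect ρ (fun η => crate m ρ η (siteSplit L L' (.inl j))
        * (g (flipAt η (siteSplit L L' (.inl j))) - g η) ^ 2)
      = ∑ a, ∑ b, bern ρ a * bern ρ b
          * (crate m ρ (configSplit L L' (a, b)) (siteSplit L L' (.inl j))
            * (g (configSplit L L' (flipAt a j, b)) - g (configSplit L L' (a, b))) ^ 2) := by
  simp only [expect_eq_sum_configSplit, flipAt_configSplit_inl]

lemma expect_crate_inr_eq_sum (m : KCM) (g : Config (L + L' + 2) → ℝ) (j : Fin (L' + 1)) :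
    expect ρ (fun η => crate m ρ η (siteSplit L L' (.inr j))
        * (g (flipAt η (siteSplit L L' (.inr j))) - g η) ^ 2)
      = ∑ b, ∑ a, bern ρ b * bern ρ a
          * (crate m ρ (configSplit L L' (a, b)) (siteSplit L L' (.inr j))
            * (g (configSplit L L' (a, flipAt b j)) - g (configSplit L L' (a, b))) ^ 2) := by
  simp only [expect_eq_sum_configSplit, flipAt_configSplit_inr, mul_comm (bern ρ _) (bern ρ _)]
  exact sum_comm

noncomputable def marginalLeft (ρ : ℝ) (f : Config (L + L' + 2) → ℝ) (a : Config (L + 1)) : ℝ :=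
  expect ρ fun b : Config (L' + 1) => f (configSplit L L' (a, b))

noncomputable def marginalRight (ρ : ℝ) (f : Config (L + L' + 2) → ℝ) (b : Config (L' + 1)) : ℝ :=
  expect ρ fun a : Config (L + 1) => f (configSplit L L' (a, b))

lemma dirichlet_marginal_add_le (h0 : 0 ≤ ρ) (h1 : ρ ≤ 1) {f : Config (L + L' + 2) → ℝ}
    (hf : ∀ η, 0 ≤ f η) :
    dirichlet KCM.fa1 ρ (fun a => √(marginalLeft ρ f a))
        + dirichlet KCM.fa1 ρ (fun b => √(marginalRight ρ f b))
      ≤ dirichlet KCM.fa2 ρ (fun η => √(f η)) := by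
  rw [dirichlet_eq_sum_siteSplit]
  refine add_le_add (sum_le_sum fun j _ => ?_) (sum_le_sum fun j _ => ?_)
  · rw [expect_crate_inl_eq_sum _ (fun η => √(f η))]
    simp only [_root_.expect, marginalLeft]
    exact sum_sq_sqrt_marginal_le (F := fun a b => f (configSplit L L' (a, b)))
      (bern_nonneg h0 h1) (bern_nonneg h0 h1)
      (crate_nonneg _ h0 h1 · j) (crate_fa1_le_configSplit_inl h0 h1 · · j) (flipAt · j)
      fun a b => hf _
  · rw [expect_crate_inr_eq_sum _ (fun η => √(f η))]
    simp only [_root_.expect, marginalRight]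
    exact sum_sq_sqrt_marginal_le (F := fun b a => f (configSplit L L' (a, b)))
      (bern_nonneg h0 h1) (bern_nonneg h0 h1)
      (crate_nonneg _ h0 h1 · j) (fun b a => crate_fa1_le_configSplit_inr h0 h1 a b j)
      (flipAt · j) fun b a => hf _

lemma expect_configSplit_symm_mul (G : Config (L + 1) → ℝ) (H : Config (L' + 1) → ℝ) :
    expect ρ (fun η => G ((configSplit L L').symm η).1 * H ((configSplit L L').symm η).2)
      = expect ρ G * expect ρ H := by
  rw [expect_eq_sum_configSplit]
  simp only [Equiv.symm_apply_apply, _root_.expect, sum_mul_sum]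
  exact sum_congr rfl fun a _ => sum_congr rfl fun b _ => by ring

lemma expect_marginalLeft_mul (f : Config (L + L' + 2) → ℝ) (G : Config (L + 1) → ℝ) :
    expect ρ (fun a => marginalLeft ρ f a * G a)
      = expect ρ (fun η => f η * G ((configSplit L L').symm η).1) := by
  rw [expect_eq_sum_configSplit (L' := L')]
  simp only [Equiv.symm_apply_apply, _root_.expect, marginalLeft,
    sum_mul, mul_sum]
  exact sum_congr rfl fun a _ => sum_congr rfl fun b _ => by ring

lemma expect_marginalRight_mul (f : Config (L + L' + 2) → ℝ) (H : Config (L' + 1) → ℝ) :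
    expect ρ (fun b => marginalRight ρ f b * H b)
      = expect ρ (fun η => f η * H ((configSplit L L').symm η).2) := by
  rw [expect_eq_sum_configSplit (L := L)]
  simp only [Equiv.symm_apply_apply, _root_.expect, marginalRight,
    sum_mul, mul_sum]
  rw [sum_comm]
  exact sum_congr rfl fun a _ => sum_congr rfl fun b _ => by ring

end Marginals

section Admissible
variable {ρ : ℝ} {n L L' : ℕ}

def SigmaOneAdmissible (ρ : ℝ) {N : ℕ} (f : Config N → ℝ) : Prop :=
  (∀ η, 0 ≤ f η) ∧ expect ρ f = 1 ∧ expect ρ (fun η => f η * occAt η 0 0 1) = 1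

def SigmaTwoAdmissible (ρ : ℝ) (L L' : ℕ) (f : Config (L + L' + 2) → ℝ) : Prop :=
  (∀ η, 0 ≤ f η) ∧ expect ρ f = 1 ∧
    expect ρ (fun η => f η * occ η ⟨L, by omega⟩ * occ η ⟨L + 1, by omega⟩) = 1

lemma occAt_one (η : Config (n + 1)) : occAt η 0 0 1 = occ η 0 := rfl

lemma occAt_configSplit_symm_fst (η : Config (L + L' + 2)) :
    occAt ((configSplit L L').symm η).1 0 0 1 = occ η ⟨L, by omega⟩ := by
  obtain ⟨⟨a, b⟩, rfl⟩ := (configSplit L L').surjective η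
  simp [occAt_one, occ, configSplit_apply_of_le a b (le_refl L)]

lemma occAt_configSplit_symm_snd (η : Config (L + L' + 2)) :
    occAt ((configSplit L L').symm η).2 0 0 1 = occ η ⟨L + 1, by omega⟩ := by
  obtain ⟨⟨a, b⟩, rfl⟩ := (configSplit L L').surjective η
  simp [occAt_one, occ, configSplit_apply_of_lt a b (Nat.lt_succ_self L)]

lemma SigmaTwoAdmissible.marginalLeft (h0 : 0 ≤ ρ) (h1 : ρ ≤ 1) {f : Config (L + L' + 2) → ℝ}
    (hf : SigmaTwoAdmissible ρ L L' f) : SigmaOneAdmissible ρ (marginalLeft ρ f) := by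
  obtain ⟨hf0, hE, hw⟩ := hf
  simp only [mul_assoc] at hw
  refine ⟨fun a => expect_nonneg h0 h1 fun b => hf0 _, ?_, ?_⟩
  · simpa [hE] using expect_marginalLeft_mul (ρ := ρ) f 1
  · rw [expect_marginalLeft_mul]
    simp only [occAt_configSplit_symm_fst]
    exact expect_mul_eq_one_of_le h0 h1 hf0
      (fun η => mul_le_of_le_one_right (occ_nonneg η _) (occ_le_one η _)) (occ_le_one · _) hE hw

lemma SigmaTwoAdmissible.marginalRight (h0 : 0 ≤ ρ) (h1 : ρ ≤ 1) {f : Config (L + L' + 2) → ℝ}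
    (hf : SigmaTwoAdmissible ρ L L' f) : SigmaOneAdmissible ρ (marginalRight ρ f) := by
  obtain ⟨hf0, hE, hw⟩ := hf
  simp only [mul_assoc] at hw
  refine ⟨fun b => expect_nonneg h0 h1 fun a => hf0 _, ?_, ?_⟩
  · simpa [hE] using expect_marginalRight_mul (ρ := ρ) f 1
  · rw [expect_marginalRight_mul]
    simp only [occAt_configSplit_symm_snd]
    exact expect_mul_eq_one_of_le h0 h1 hf0
      (fun η => mul_le_of_le_one_left (occ_nonneg η _) (occ_le_one η _)) (occ_le_one · _) hE hw

lemma SigmaOneAdmissible.mul {g : Config (L + 1) → ℝ} {h : Config (L' + 1) → ℝ}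
    (hg : SigmaOneAdmissible ρ g) (hh : SigmaOneAdmissible ρ h) :
    SigmaTwoAdmissible ρ L L'
      (fun η => g ((configSplit L L').symm η).1 * h ((configSplit L L').symm η).2) := by
  refine ⟨fun η => mul_nonneg (hg.1 _) (hh.1 _), ?_, ?_⟩
  · rw [expect_configSplit_symm_mul, hg.2.1, hh.2.1, mul_one]
  · simp only [← occAt_configSplit_symm_fst, ← occAt_configSplit_symm_snd]
    calc _ = expect ρ (fun a => g a * occAt a 0 0 1) * expect ρ (fun b => h b * occAt b 0 0 1) := by
          rw [← expect_configSplit_symm_mul]; exact congrArg _ (funext fun η => by ring)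
      _ = 1 := by rw [hg.2.2, hh.2.2, mul_one]

lemma SigmaOneAdmissible.apply_zero (h0 : 0 < ρ) (h1 : ρ < 1) {f : Config (n + 1) → ℝ}
    (hf : SigmaOneAdmissible ρ f) {η : Config (n + 1)} (hη : f η ≠ 0) : η 0 = true := by
  have h := mul_eq_self_of_expect_mul_eq_one h0 h1 hf.1
    (occAt_le_one · zero_le_one zero_le_one 1) hf.2.1 hf.2.2 η
  by_contra h'
  simp [occAt_one, occ, h', eq_comm, hη] at h

lemma exists_sigmaOneAdmissible (h0 : 0 < ρ) (h1 : ρ < 1) (n : ℕ) :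
    ∃ f : Config (n + 1) → ℝ, SigmaOneAdmissible ρ f :=
  exists_expect_eq_one_of_idempotent h0 h1 (occAt_nonneg · le_rfl le_rfl 1)
    (fun η => by simp [occAt_one, occ]) (η₀ := fun _ => true) (by simp [occAt_one, occ])

lemma dirichlet_fa2_configSplit_symm_mul (h0 : 0 < ρ) (h1 : ρ < 1)
    {g : Config (L + 1) → ℝ} {h : Config (L' + 1) → ℝ}
    (hg : SigmaOneAdmissible ρ g) (hh : SigmaOneAdmissible ρ h) :
    dirichlet KCM.fa2 ρ
        (fun η => √(g ((configSplit L L').symm η).1 * h ((configSplit L L').symm η).2))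
      = dirichlet KCM.fa1 ρ (fun a => √(g a)) + dirichlet KCM.fa1 ρ (fun b => √(h b)) := by
  rw [dirichlet_eq_sum_siteSplit]
  congr 1 <;> refine sum_congr rfl fun j _ => ?_
  · rw [expect_crate_inl_eq_sum _
      (fun η => √(g ((configSplit L L').symm η).1 * h ((configSplit L L').symm η).2))]
    simp only [Equiv.symm_apply_apply]
    exact sum_sq_sqrt_mul_eq (c := (crate KCM.fa1 ρ · j)) (flipAt · j) hg.1 hh.1
      (fun a b hb => crate_configSplit_inl_of_occupied a (hh.apply_zero h0 h1 hb) j) hh.2.1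
  · rw [expect_crate_inr_eq_sum _
      (fun η => √(g ((configSplit L L').symm η).1 * h ((configSplit L L').symm η).2))]
    simp only [Equiv.symm_apply_apply, mul_comm (g _)]
    exact sum_sq_sqrt_mul_eq (c := (crate KCM.fa1 ρ · j)) (flipAt · j) hh.1 hg.1
      (fun b a ha => crate_configSplit_inr_of_occupied (hg.apply_zero h0 h1 ha) b j) hg.2.1

end Admissible

section Variational
variable {ρ : ℝ} {L L' : ℕ}

lemma sigmaOne_le_dirichlet (m : KCM) (h0 : 0 ≤ ρ) (h1 : ρ ≤ 1) {f : Config L → ℝ}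
    (hf : SigmaOneAdmissible ρ f) : SigmaOne m ρ L ≤ dirichlet m ρ (fun η => √(f η)) :=
  csInf_le ⟨0, by rintro _ ⟨f, -, -, -, rfl⟩; exact dirichlet_nonneg m h0 h1 _⟩
    ⟨f, hf.1, hf.2.1, hf.2.2, rfl⟩

lemma le_sigmaOne {m : KCM} {c : ℝ} (hne : ∃ f : Config L → ℝ, SigmaOneAdmissible ρ f)
    (h : ∀ f : Config L → ℝ, SigmaOneAdmissible ρ f → c ≤ dirichlet m ρ (fun η => √(f η))) :
    c ≤ SigmaOne m ρ L := by
  obtain ⟨f, hf⟩ := hne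
  exact le_csInf ⟨_, f, hf.1, hf.2.1, hf.2.2, rfl⟩
    fun _ ⟨f, h0, h1, h2, hx⟩ => hx ▸ h f ⟨h0, h1, h2⟩

lemma sigmaTwo_le_dirichlet (h0 : 0 ≤ ρ) (h1 : ρ ≤ 1) {f : Config (L + L' + 2) → ℝ}
    (hf : SigmaTwoAdmissible ρ L L' f) : SigmaTwo ρ L L' ≤ dirichlet KCM.fa2 ρ (fun η => √(f η)) :=
  csInf_le ⟨0, by rintro _ ⟨f, -, -, -, rfl⟩; exact dirichlet_nonneg _ h0 h1 _⟩
    ⟨f, hf.1, hf.2.1, hf.2.2, rfl⟩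

lemma le_sigmaTwo {c : ℝ} (hne : ∃ f : Config (L + L' + 2) → ℝ, SigmaTwoAdmissible ρ L L' f)
    (h : ∀ f : Config (L + L' + 2) → ℝ, SigmaTwoAdmissible ρ L L' f →
      c ≤ dirichlet KCM.fa2 ρ (fun η => √(f η))) :
    c ≤ SigmaTwo ρ L L' := by
  obtain ⟨f, hf⟩ := hne
  exact le_csInf ⟨_, f, hf.1, hf.2.1, hf.2.2, rfl⟩
    fun _ ⟨f, h0, h1, h2, hx⟩ => hx ▸ h f ⟨h0, h1, h2⟩

theorem sigmaTwo_eq_sigmaOne_add (h0 : 0 < ρ) (h1 : ρ < 1) (L L' : ℕ) :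
    SigmaTwo ρ L L' = SigmaOne KCM.fa1 ρ (L + 1) + SigmaOne KCM.fa1 ρ (L' + 1) := by
  have hneL := exists_sigmaOneAdmissible h0 h1 L
  have hneL' := exists_sigmaOneAdmissible h0 h1 L'
  have upper : ∀ g h, SigmaOneAdmissible ρ g → SigmaOneAdmissible ρ h →
      SigmaTwo ρ L L' ≤ dirichlet KCM.fa1 ρ (fun a => √(g a))
        + dirichlet KCM.fa1 ρ (fun b => √(h b)) := fun g h hg hh =>
    dirichlet_fa2_configSplit_symm_mul h0 h1 hg hh ▸ sigmaTwo_le_dirichlet h0.le h1.le (hg.mul hh)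
  refine le_antisymm ?_ (le_sigmaTwo ?_ fun f hf => ?_)
  · have := le_sigmaOne hneL' fun h hh =>
      sub_le_comm.1 <| le_sigmaOne hneL fun g hg => sub_le_iff_le_add.2 (upper g h hg hh)
    linarith
  · obtain ⟨g, hg⟩ := hneL
    obtain ⟨h, hh⟩ := hneL'
    exact ⟨_, hg.mul hh⟩
  · exact (add_le_add (sigmaOne_le_dirichlet _ h0.le h1.le (hf.marginalLeft h0.le h1.le))
      (sigmaOne_le_dirichlet _ h0.le h1.le (hf.marginalRight h0.le h1.le))).trans
      (dirichlet_marginal_add_le h0.le h1.le hf.1)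

end Variational

/-- **Remark 5.6** (relation between the FA-1f interface energies). At density
`ρ ∈ (0,1)`, the two-boundary FA-1f interface energy `Σ₁ = lim_L lim_{L'} Σ_{L,L'}`
and the one-boundary FA-1f interface energy `Σ₂ = lim_L Σ_L` satisfy `Σ₁ = 2Σ₂`. -/
theorem sigmaTwo_eq_two_mul_sigmaOne (ρ : ℝ) (hρ0 : 0 < ρ) (hρ1 : ρ < 1)
    (Sg1 Sg2 : ℝ) (S : ℕ → ℝ)
    (hS : ∀ L : ℕ, Filter.Tendsto (fun L' : ℕ => SigmaTwo ρ L L') Filter.atTop (nhds (S L)))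
    (hSg1 : Filter.Tendsto S Filter.atTop (nhds Sg1))
    (hSg2 : Filter.Tendsto (fun L : ℕ => SigmaOne KCM.fa1 ρ L) Filter.atTop (nhds Sg2)) :
    Sg1 = 2 * Sg2 := by
  have hSg2' : Tendsto (fun L => SigmaOne KCM.fa1 ρ (L + 1)) atTop (nhds Sg2) :=
    hSg2.comp (tendsto_add_atTop_nat 1)
  have hS_eq : ∀ L, S L = SigmaOne KCM.fa1 ρ (L + 1) + Sg2 := fun L =>
    tendsto_nhds_unique (hS L) <| by
      simpa only [sigmaTwo_eq_sigmaOne_add hρ0 hρ1] using tendsto_const_nhds.add hSg2'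
  have : Tendsto S atTop (nhds (Sg2 + Sg2)) := funext hS_eq ▸ hSg2'.add_const Sg2
  rw [tendsto_nhds_unique hSg1 this, two_mul]
end

section
/- Bernoulli coarse-graining bound (inequality (tobe) in the proof of Lemma 4.2). Let p∈(0,1), M≥1 an integer, and let m_p be the Bernoulli product measure with density p on {0,1}^M. Let δ∈[0,1] and let g:{0,1}^M→[0,∞) satisfy m_p(g)=1 and m_p(g·ω_j) ≥ δ for some coordinate j∈{1,…,M}. Then m_p(√g)² ≤ 1 − δ + p + √p. -/
open Finset Filter

open scoped Classical

lemma bern_nonneg_s11 {p : ℝ} (hp0 : 0 ≤ p) (hp1 : p ≤ 1) {M : ℕ} (η : Config M) :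
    0 ≤ bern p η := by
  apply Finset.prod_nonneg
  intro i _
  split <;> linarith

lemma sum_bern_eq_one {p : ℝ} {M : ℕ} :
    ∑ η : Config M, bern p η = 1 := by
  have h : ∑ η : Config M, bern p η
      = ∑ η : Config M, ∏ i, (fun i b => if b then p else 1 - p) i (η i) := rfl
  have key := Finset.sum_prod_piFinset (Finset.univ : Finset Bool)
    (fun (i : Fin M) (b : Bool) => if b then p else 1 - p)
  rw [Fintype.piFinset_univ] at key
  rw [h, key]
  simp [Fintype.sum_bool]

lemma sum_bern_occ {p : ℝ} {M : ℕ} (j : Fin M) :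
    ∑ η : Config M, bern p η * occ η j = p := by
  have h : ∀ η : Config M, bern p η * occ η j
      = ∏ i, (fun i b => (if b then p else 1 - p) * (if i = j then (if b then (1:ℝ) else 0) else 1)) i (η i) := by
    intro η
    rw [Finset.prod_mul_distrib]
    congr 1
    rw [Finset.prod_ite_eq' Finset.univ j (fun i => if η i then (1:ℝ) else 0)]
    simp [occ]
  simp_rw [h]
  have key := Finset.sum_prod_piFinset (Finset.univ : Finset Bool)
    (fun (i : Fin M) (b : Bool) => (if b then p else 1 - p) * (if i = j then (if b then (1:ℝ) else 0) else 1))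
  rw [Fintype.piFinset_univ] at key
  rw [key]
  rw [Finset.prod_eq_single j]
  · simp [Fintype.sum_bool]
  · intro i _ hij
    simp [Fintype.sum_bool, hij]
  · simp

set_option maxHeartbeats 1600000 in
/-- **Bernoulli coarse-graining bound** (inequality (tobe) in the proof of
Lemma 4.2). Let `p ∈ (0,1)`, `M ≥ 1` and `m_p` the Bernoulli(p) product measure
on `{0,1}^M`. If `g ≥ 0`, `m_p(g) = 1` and `m_p(g·ω_j) ≥ δ` for some coordinate
`j`, with `δ ∈ [0,1]`, then `m_p(√g)² ≤ 1 − δ + p + √p`. -/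
theorem bernoulli_coarse_graining_bound (p : ℝ) (hp0 : 0 < p) (hp1 : p < 1)
    (M : ℕ) (hM : 1 ≤ M) (δ : ℝ) (hδ0 : 0 ≤ δ) (hδ1 : δ ≤ 1)
    (g : Config M → ℝ) (hg : ∀ ω, 0 ≤ g ω) (hg1 : expect p g = 1)
    (j : Fin M) (hgj : δ ≤ expect p (fun ω => g ω * occ ω j)) :
    (expect p (fun ω => Real.sqrt (g ω))) ^ 2 ≤ 1 - δ + p + Real.sqrt p := by
  classical
  have hp0' : (0:ℝ) ≤ p := le_of_lt hp0
  have hp1' : p ≤ 1 := le_of_lt hp1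
  set ν : Config M → ℝ := bern p with hν
  have hνn : ∀ η, 0 ≤ ν η := fun η => bern_nonneg_s11 hp0' hp1' η
  set S1 : Finset (Config M) := Finset.univ.filter (fun η => η j = true) with hS1
  set S0 : Finset (Config M) := Finset.univ.filter (fun η => ¬ (η j = true)) with hS0
  -- reduce expectations to sums over S0/S1
  have hocc1 : ∀ (h : Config M → ℝ),
      (∑ η : Config M, ν η * h η * occ η j) = ∑ η ∈ S1, ν η * h η := by
    intro h
    rw [hS1, Finset.sum_filter]
    apply Finset.sum_congr rfl
    intro η _
    by_cases hη : η j = true <;> simp [occ, hη]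
  have hsplit : ∀ (h : Config M → ℝ),
      (∑ η : Config M, ν η * h η) = (∑ η ∈ S1, ν η * h η) + ∑ η ∈ S0, ν η * h η := by
    intro h
    rw [hS1, hS0, Finset.sum_filter_add_sum_filter_not]
  set A : ℝ := ∑ η ∈ S1, ν η * g η with hA
  have hδA : δ ≤ A := by
    have := hgj
    simp only [_root_.expect, ← hν] at this
    have h2 : (∑ η : Config M, bern p η * (g η * occ η j))
        = ∑ η ∈ S1, ν η * g η := by
      rw [← hocc1 g]; apply Finset.sum_congr rfl; intro η _; ring
    rw [h2] at this; exact this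
  have hS0g : (∑ η ∈ S0, ν η * g η) = 1 - A := by
    have := hg1
    simp only [_root_.expect, ← hν] at this
    rw [hsplit g] at this
    linarith
  have hS1ν : (∑ η ∈ S1, ν η) = p := by
    have := sum_bern_occ (p := p) j
    have h2 : (∑ η : Config M, ν η * 1 * occ η j) = ∑ η ∈ S1, ν η * 1 := hocc1 1
    simp only [mul_one] at h2
    rw [← h2, hν]
    exact this
  have hS0ν : (∑ η ∈ S0, ν η) = 1 - p := by
    have h1 := sum_bern_eq_one (p := p) (M := M)
    have h2 : (∑ η : Config M, ν η * 1) = (∑ η ∈ S1, ν η * 1) + ∑ η ∈ S0, ν η * 1 :=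
      hsplit 1
    simp only [mul_one] at h2
    rw [hν] at h2 ⊢
    rw [h1, hS1ν] at h2
    linarith
  have hA0 : 0 ≤ A := Finset.sum_nonneg fun η _ => mul_nonneg (hνn η) (hg η)
  have hA1 : A ≤ 1 := by
    have : 0 ≤ ∑ η ∈ S0, ν η * g η :=
      Finset.sum_nonneg fun η _ => mul_nonneg (hνn η) (hg η)
    linarith [hS0g]
  set a : ℝ := ∑ η ∈ S0, ν η * Real.sqrt (g η) with ha
  set b : ℝ := ∑ η ∈ S1, ν η * Real.sqrt (g η) with hb
  have hEab : expect p (fun ω => Real.sqrt (g ω)) = b + a := by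
    simp only [_root_.expect, ← hν]
    rw [hsplit (fun ω => Real.sqrt (g ω))]
  -- Cauchy-Schwarz on each piece
  have key : ∀ S : Finset (Config M), (∑ η ∈ S, ν η * Real.sqrt (g η)) ^ 2
      ≤ (∑ η ∈ S, ν η * g η) * ∑ η ∈ S, ν η := by
    intro S
    have hcs := Finset.sum_mul_sq_le_sq_mul_sq S
      (fun η => Real.sqrt (ν η) * Real.sqrt (g η)) (fun η => Real.sqrt (ν η))
    have e1 : ∀ η, Real.sqrt (ν η) * Real.sqrt (g η) * Real.sqrt (ν η)
        = ν η * Real.sqrt (g η) := by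
      intro η
      rw [mul_right_comm, Real.mul_self_sqrt (hνn η)]
    have e2 : ∀ η, (Real.sqrt (ν η) * Real.sqrt (g η)) ^ 2 = ν η * g η := by
      intro η
      rw [mul_pow, Real.sq_sqrt (hνn η), Real.sq_sqrt (hg η)]
    have e3 : ∀ η, (Real.sqrt (ν η)) ^ 2 = ν η := fun η => Real.sq_sqrt (hνn η)
    simp only [e1, e2, e3] at hcs
    exact hcs
  have ha2 : a ^ 2 ≤ (1 - A) * (1 - p) := by
    have := key S0; rw [hS0g, hS0ν] at this; exact this
  have hb2 : b ^ 2 ≤ A * p := by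
    have := key S1; rw [← hA, hS1ν] at this; exact this
  have ha0 : 0 ≤ a := Finset.sum_nonneg fun η _ => mul_nonneg (hνn η) (Real.sqrt_nonneg _)
  have hb0 : 0 ≤ b := Finset.sum_nonneg fun η _ => mul_nonneg (hνn η) (Real.sqrt_nonneg _)
  -- bound the cross term
  have hab : 2 * (a * b) ≤ Real.sqrt p := by
    have hsq : (2 * (a * b)) ^ 2 ≤ p := by
      nlinarith [sq_nonneg (a*b), sq_nonneg a, sq_nonneg b, mul_nonneg ha0 hb0,
        sq_nonneg (a - b), sq_nonneg (a + b), mul_nonneg hA0 hp0',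
        sq_nonneg (2*A - 1), mul_nonneg (mul_nonneg hA0 hp0') (sub_nonneg.2 hA1)]
    have h1 : 2 * (a * b) = Real.sqrt ((2 * (a * b)) ^ 2) := by
      rw [Real.sqrt_sq (by positivity)]
    rw [h1]
    exact Real.sqrt_le_sqrt hsq
  have hsp : 0 ≤ Real.sqrt p := Real.sqrt_nonneg p
  rw [hEab]
  nlinarith [ha2, hb2, hab, hA1, hδA, hp0', hp1', mul_nonneg hA0 hp0']
end

section
/- Combinatorial label inequality (inequality (soloq) in the proof of Lemma 4.1). For the East model or the FA-1f model (either boundary choice) in dimension 1 at density ρ∈(0,1), with K dividing N and ε>0 satisfying ρ+ε<1 and 𝔸·|B̃_i|−εK>0, one has for every configuration η∈Ω_N: Σ_{i=1}^{N/K} 1{u^i_{K,ε}(η)=0} ≤ V(η), where V(η) = Σ_{i=1}^{N/K−1} 1_{𝓔_i}(η)·1_{𝓩_{i+1}}(η) + 1_{𝓔_{N/K}}(η). -/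
open Finset Filter

open scoped Classical

/-- The rate `c_k(η)` at the 0-indexed site `k : ℕ` (`0` if `k` is out of range). -/
noncomputable def crateNat (m : KCM) (ρ : ℝ) {N : ℕ} (η : Config N) (k : ℕ) : ℝ :=
  if h : k < N then crate m ρ η ⟨k, h⟩ else 0

/-- The constraint `r_k(η)` at the 0-indexed site `k : ℕ` (`0` if `k` is out of range). -/
noncomputable def constrNat (m : KCM) {N : ℕ} (η : Config N) (k : ℕ) : ℝ :=
  if h : k < N then constr m η ⟨k, h⟩ else 0

/-- The (0-indexed) block `B_{b+1} = {bK+1,…,(b+1)K}` is completely filled. -/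
def blockFull {N : ℕ} (K b : ℕ) (η : Config N) : Prop :=
  ∀ x : Fin N, b * K ≤ x.1 → x.1 < (b + 1) * K → η x = true

/-- The (0-indexed) block `B_{b+1}` contains at least one empty site. -/
def blockHasZero {N : ℕ} (K b : ℕ) (η : Config N) : Prop :=
  ∃ x : Fin N, b * K ≤ x.1 ∧ x.1 < (b + 1) * K ∧ η x = false

/-- The 0-indexed offsets (within a block of size `K`) of the sites of `B̃_i`,
whose constraint only depends on the configuration inside the block:
all but the last site for East, all but the first and last sites for FA-1f. -/
def interiorIdx (m : KCM) (K : ℕ) : Finset ℕ :=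
  match m with
  | KCM.east => Finset.range (K - 1)
  | _ => Finset.Ioo 0 (K - 1)

/-- The block activity `𝓗_i(η) = Σ_{x∈B̃_i} c_x(η)` for the 0-indexed block `b`. -/
noncomputable def blockAct (m : KCM) (ρ : ℝ) {N : ℕ} (K b : ℕ) (η : Config N) : ℝ :=
  ∑ j ∈ interiorIdx m K, crateNat m ρ η (b * K + j)

/-- The block density `𝓡_i(η) = K^{-1} Σ_{x∈B_i} η_x` for the 0-indexed block `b`. -/
noncomputable def blockDens {N : ℕ} (K b : ℕ) (η : Config N) : ℝ :=
  (∑ j ∈ Finset.range K, occAt η 0 0 (b * K + j + 1)) / K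

/-- The activity-density label `u^i_{K,ε}(η)` of the 0-indexed block `b`. -/
noncomputable def label (m : KCM) (ρ ε : ℝ) {N : ℕ} (K : ℕ) (η : Config N) (b : ℕ) : ℤ :=
  if blockFull K b η then 1
  else if |blockAct m ρ K b η - meanAct m ρ * ((interiorIdx m K).card : ℝ)| ≤ ε * K ∧
          |blockDens K b η - ρ| ≤ ε then -1
  else 0

/-- Indicator of the event `𝓔_i = {u^i_{K,ε} ∈ {0,1}}` for the 0-indexed block `b`. -/
noncomputable def indE (m : KCM) (ρ ε : ℝ) {N : ℕ} (K : ℕ) (η : Config N) (b : ℕ) : ℝ :=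
  if label m ρ ε K η b ≠ -1 then 1 else 0

/-- Indicator of the event `𝓩_i` that the 0-indexed block `b` has an empty site. -/
noncomputable def indZ {N : ℕ} (K : ℕ) (η : Config N) (b : ℕ) : ℝ :=
  if blockHasZero K b η then 1 else 0

/-- The function `V(η) = Σ_{i=1}^{N/K−1} 1_{𝓔_i}1_{𝓩_{i+1}} + 1_{𝓔_{N/K}}`. -/
noncomputable def Vfun (m : KCM) (ρ ε : ℝ) {N : ℕ} (K : ℕ) (η : Config N) : ℝ :=
  (∑ b ∈ Finset.range (N / K - 1), indE m ρ ε K η b * indZ K η (b + 1))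
    + indE m ρ ε K η (N / K - 1)

/-- Conditional expectation in the coordinates of `B` w.r.t. Bernoulli(ρ),
the coordinates outside `B` being held fixed. -/
noncomputable def condExp (ρ : ℝ) {N : ℕ} (B : Finset (Fin N)) (g : Config N → ℝ)
    (η : Config N) : ℝ :=
  ∑ ζ : {x // x ∈ B} → Bool,
    (∏ i : {x // x ∈ B}, (if ζ i then ρ else 1 - ρ)) *
      g (fun j => if h : j ∈ B then ζ ⟨j, h⟩ else η j)

/-- Conditional variance `Var_B(g)(η)` in the coordinates of `B`. -/
noncomputable def condVar (ρ : ℝ) {N : ℕ} (B : Finset (Fin N)) (g : Config N → ℝ)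
    (η : Config N) : ℝ :=
  condExp ρ B (fun σ => g σ ^ 2) η - (condExp ρ B g η) ^ 2

/-- The 0-indexed block `b` as a `Finset (Fin N)`. -/
def blockSet (N K b : ℕ) : Finset (Fin N) :=
  Finset.univ.filter fun x => b * K ≤ x.1 ∧ x.1 < (b + 1) * K

/-- The model whose Dirichlet form on finite intervals with empty right boundary
condition appears in the uniform spectral gap hypothesis: East for East,
FA-1f with one empty (right) boundary for FA-1f. -/
def gapModel : KCM → KCM
  | KCM.east => KCM.east
  | _ => KCM.fa1

/-- **Combinatorial label inequality** (inequality (soloq) in the proof of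
Lemma 4.1). For the East model or the FA-1f model (either boundary choice) in
dimension 1 at density `ρ ∈ (0,1)`, with `K` dividing `N` and `ε > 0` such that
`ρ + ε < 1` and `𝔸·|B̃_i| − εK > 0`: for every configuration `η`, the number of
blocks with label `0` is at most `V(η)`. -/
theorem label_inequality (ρ : ℝ) (hρ0 : 0 < ρ) (hρ1 : ρ < 1) (m : KCM)
    (K N : ℕ) (hK : 0 < K) (hN : K ≤ N) (hKN : K ∣ N)
    (ε : ℝ) (hε : 0 < ε) (hε1 : ρ + ε < 1)
    (hε2 : ε * K < meanAct m ρ * ((interiorIdx m K).card : ℝ))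
    (η : Config N) :
    (∑ b ∈ Finset.range (N / K), (if label m ρ ε K η b = 0 then (1 : ℝ) else 0))
      ≤ Vfun m ρ ε K η := by
  classical
  set n := N / K with hn
  have hn1 : 1 ≤ n := (Nat.one_le_div_iff hK).mpr hN
  -- not having a zero means being full
  have hfull : ∀ c, ¬ blockHasZero K c η → blockFull K c η := by
    intro c hc x hx1 hx2
    by_contra h
    exact hc ⟨x, hx1, hx2, by simpa using h⟩
  have hfull1 : ∀ c, blockFull K c η → label m ρ ε K η c = 1 := by
    intro c hc; simp [label, hc]
  have hne : ∀ c, label m ρ ε K η c = 0 ∨ label m ρ ε K η c = 1 →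
      indE m ρ ε K η c = 1 := by
    intro c hc
    have : label m ρ ε K η c ≠ -1 := by rcases hc with h | h <;> omega
    simp [indE, this]
  set S := (Finset.range n).filter (fun b => label m ρ ε K η b = 0) with hS
  -- the map f
  have hex : ∀ b, b < n → ∃ j, b + j = n - 1 ∨ blockHasZero K (b + j + 1) η := by
    intro b hb
    exact ⟨n - 1 - b, Or.inl (by omega)⟩
  set f : ℕ → ℕ := fun b =>
    if h : ∃ j, b + j = n - 1 ∨ blockHasZero K (b + j + 1) η then b + Nat.find h
    else b with hf
  have hfle : ∀ b, b ≤ f b := by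
    intro b; simp only [hf]; split <;> omega
  have hflt : ∀ b, b < n → f b ≤ n - 1 := by
    intro b hb
    have h := hex b hb
    simp only [hf, dif_pos h]
    have := Nat.find_min' h (m := n - 1 - b) (Or.inl (by omega))
    omega
  have hspec : ∀ b, b < n → (f b = n - 1 ∨ blockHasZero K (f b + 1) η) := by
    intro b hb
    have h := hex b hb
    simp only [hf, dif_pos h]
    exact Nat.find_spec h
  have hmin : ∀ b, b < n → ∀ c, b < c → c ≤ f b → blockFull K c η := by
    intro b hb c hc1 hc2
    have h := hex b hb
    simp only [hf, dif_pos h] at hc2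
    have hm := Nat.find_min h (m := c - 1 - b) (by omega)
    apply hfull
    intro hz
    have e : b + (c - 1 - b) + 1 = c := by omega
    exact hm (Or.inr (by rw [e]; exact hz))
  have hSmem : ∀ b ∈ S, b < n ∧ label m ρ ε K η b = 0 := by
    intro b hb
    have := Finset.mem_filter.mp hb
    exact ⟨Finset.mem_range.mp this.1, this.2⟩
  have hlabf : ∀ b ∈ S, label m ρ ε K η (f b) = 0 ∨ label m ρ ε K η (f b) = 1 := by
    intro b hb
    obtain ⟨hb1, hb2⟩ := hSmem b hb
    rcases eq_or_lt_of_le (hfle b) with h | h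
    · left; rw [← h]; exact hb2
    · right; exact hfull1 _ (hmin b hb1 (f b) h le_rfl)
  -- injectivity
  have hinj : Set.InjOn f S := by
    intro b hb b' hb' hfb
    by_contra hne'
    obtain ⟨hb1, hb2⟩ := hSmem b (by simpa using hb)
    obtain ⟨hb1', hb2'⟩ := hSmem b' (by simpa using hb')
    rcases lt_trichotomy b b' with h | h | h
    · have : blockFull K b' η := hmin b hb1 b' h (hfb ▸ hfle b')
      have := hfull1 _ this
      omega
    · exact hne' h
    · have : blockFull K b η := hmin b' hb1' b h (hfb ▸ hfle b)
      have := hfull1 _ this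
      omega
  -- the term function
  set T : ℕ → ℝ := fun k =>
    if k = n - 1 then indE m ρ ε K η (n - 1)
    else indE m ρ ε K η k * indZ K η (k + 1) with hT
  have hT0 : ∀ k, 0 ≤ T k := by
    intro k
    simp only [hT]
    split
    · unfold indE; split <;> norm_num
    · apply mul_nonneg
      · unfold indE; split <;> norm_num
      · unfold indZ; split <;> norm_num
  have hT1 : ∀ b ∈ S, T (f b) = 1 := by
    intro b hb
    obtain ⟨hb1, hb2⟩ := hSmem b hb
    have he := hne _ (hlabf b hb)
    by_cases hc : f b = n - 1
    · simp only [hT]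
      rw [if_pos hc, ← hc]
      exact he
    · have hz : blockHasZero K (f b + 1) η := (hspec b hb1).resolve_left hc
      simp only [hT, if_neg hc, he, indZ, if_pos hz, one_mul]
  -- Vfun is the sum of T over range n
  have hV : Vfun m ρ ε K η = ∑ k ∈ Finset.range n, T k := by
    have hnn : n = (n - 1) + 1 := by omega
    rw [Vfun, ← hn, hnn, Finset.sum_range_succ, ← hnn]
    have : ∀ k ∈ Finset.range (n - 1), T k = indE m ρ ε K η k * indZ K η (k + 1) := by
      intro k hk
      have : k ≠ n - 1 := by have := Finset.mem_range.mp hk; omega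
      simp [hT, this]
    rw [Finset.sum_congr rfl this]
    simp [hT]
  -- LHS is the cardinality of S
  have hLHS : (∑ b ∈ Finset.range n, (if label m ρ ε K η b = 0 then (1 : ℝ) else 0))
      = (S.card : ℝ) := by
    rw [hS, Finset.sum_boole]
  rw [hLHS, hV]
  have himsub : S.image f ⊆ Finset.range n := by
    intro k hk
    obtain ⟨b, hb, rfl⟩ := Finset.mem_image.mp hk
    have := hflt b (hSmem b hb).1
    exact Finset.mem_range.mpr (by omega)
  have h1 : ∑ k ∈ S.image f, T k = (S.card : ℝ) := by
    rw [Finset.sum_eq_card_nsmul (fun k hk => by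
      obtain ⟨b, hb, rfl⟩ := Finset.mem_image.mp hk
      exact hT1 b hb)]
    rw [Finset.card_image_of_injOn hinj]
    simp
  rw [← h1]
  exact Finset.sum_le_sum_of_subset_of_nonneg himsub (fun k _ _ => hT0 k)
end

section
/- Core estimate of Lemma 4.5 (Gaussian bound for the density of non-equilibrated blocks). Consider the East model or the FA-1f model (either boundary choice) in dimension 1 at density ρ∈(0,1), with K dividing N, ε>0 as in the definition of the activity-density labels, and V(η)=Σ_{i=1}^{N/K−1} 1_{𝓔_i}(η)1_{𝓩_{i+1}}(η) + 1_{𝓔_{N/K}}(η). Assume S>0 is a uniform spectral gap lower bound for the model on finite intervals with empty right boundary condition. Set m=max_{1≤i≤N/K} ν(1_{𝓔_i}). Then for every λ∈ℝ, every γ>0, and every f:Ω_N→[0,∞) with ν(f)=1: γ·ν(f·V) − e^λ·𝒟_N(√f) ≤ (N/K)·( γ·m + 2γ²/(S·e^λ) ). -/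
open Finset Filter

open scoped Classical

/-!
On `𝓔_i ∩ 𝓩_{i+1}` let `z` be the rightmost empty site of `B_{i+1}` (for the last block, the
empty site right of the box), and condition on everything outside the window `W` from the left
end of `B_i` to just before `z`. On `W` the rates of the model dominate those of the gap model
with empty right boundary, so the spectral gap bounds the conditional variance of `√f` by the
Dirichlet form of the sites of `W`. Since `𝓔_i` only depends on `B_i ⊆ W`, its conditional
probability is at most `m`, and the conditional covariance of `f` with `𝓔_i` is at most
`4s·ν_W(f) + Var_W(√f)/(4s)` for every `s > 0`; the choice `s = γ/(2 S e^λ)` gives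
`γ m + 2γ²/(S e^λ)` per unit mass of `f` plus `e^λ/2` times the Dirichlet form of `W`. Every site
lies in at most two windows.
-/

namespace KCM

section Expectation

variable {ρ : ℝ} {N : ℕ}

lemma expect_eq_sum (g : Config N → ℝ) : expect ρ g = ∑ η, bern ρ η * g η := rfl

lemma sum_prod_bernoulli (ι : Type*) [Fintype ι] [DecidableEq ι] :
    ∑ ζ : ι → Bool, ∏ i, (if ζ i then ρ else 1 - ρ) = 1 := by
  rw [← Fintype.prod_sum (fun (_ : ι) (b : Bool) => if b then ρ else 1 - ρ)]
  simp

lemma expect_const (c : ℝ) : expect ρ (fun _ : Config N => c) = c := by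
  rw [expect_eq_sum, ← Finset.sum_mul]
  unfold bern
  rw [sum_prod_bernoulli, one_mul]

lemma expect_add (g h : Config N → ℝ) :
    expect ρ (fun η => g η + h η) = expect ρ g + expect ρ h := by
  simp only [expect_eq_sum, mul_add, Finset.sum_add_distrib]

lemma expect_const_mul (c : ℝ) (g : Config N → ℝ) :
    expect ρ (fun η => c * g η) = c * expect ρ g := by
  simp only [expect_eq_sum, Finset.mul_sum]
  exact Finset.sum_congr rfl fun _ _ => by ring

lemma expect_sum {α : Type*} (s : Finset α) (g : α → Config N → ℝ) :
    expect ρ (fun η => ∑ a ∈ s, g a η) = ∑ a ∈ s, expect ρ (g a) := by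
  simp only [expect_eq_sum, Finset.mul_sum]
  exact Finset.sum_comm

lemma expect_add_const_sq (h : Config N → ℝ) (c : ℝ) :
    expect ρ (fun η => (h η + c) ^ 2)
      = expect ρ (fun η => h η ^ 2) + 2 * c * expect ρ h + c ^ 2 := by
  have : ∀ η, (h η + c) ^ 2 = h η ^ 2 + (2 * c * h η + c ^ 2) := fun η => by ring
  simp only [this, expect_add, expect_const_mul, expect_const, add_assoc]

variable (hρ0 : 0 ≤ ρ) (hρ1 : ρ ≤ 1)
include hρ0 hρ1

lemma bern_nonneg (η : Config N) : 0 ≤ bern ρ η :=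
  Finset.prod_nonneg fun i _ => by split_ifs <;> linarith

lemma expect_mono {g h : Config N → ℝ} (hgh : ∀ η, g η ≤ h η) : expect ρ g ≤ expect ρ h :=
  Finset.sum_le_sum fun η _ => mul_le_mul_of_nonneg_left (hgh η) (bern_nonneg hρ0 hρ1 η)

lemma expect_nonneg {g : Config N → ℝ} (hg : ∀ η, 0 ≤ g η) : 0 ≤ expect ρ g := by
  simpa [expect_const] using expect_mono hρ0 hρ1 (g := fun _ => 0) hg

/-- `Cov(h², ψ) = ν((h - ν h)(h + ν h)(ψ - ν ψ))` with `|ψ - ν ψ| ≤ 1`; Young's inequality then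
leaves the second moments `Var h` of `h - ν h` and `≤ 4 ν(h²)` of `h + ν h`. -/
lemma expect_sq_mul_le {M : ℕ} (h ψ : Config M → ℝ) (hψ0 : ∀ ξ, 0 ≤ ψ ξ) (hψ1 : ∀ ξ, ψ ξ ≤ 1)
    {s : ℝ} (hs : 0 < s) :
    expect ρ (fun ξ => h ξ ^ 2 * ψ ξ)
      ≤ expect ρ (fun ξ => h ξ ^ 2) * expect ρ ψ + 4 * s * expect ρ (fun ξ => h ξ ^ 2)
        + (expect ρ (fun ξ => h ξ ^ 2) - expect ρ h ^ 2) / (4 * s) := by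
  set A := expect ρ (fun ξ => h ξ ^ 2)
  set a := expect ρ h
  set q := expect ρ ψ
  have hq0 : 0 ≤ q := expect_nonneg hρ0 hρ1 hψ0
  have hq1 : q ≤ 1 := (expect_mono hρ0 hρ1 hψ1).trans_eq (expect_const 1)
  have ha : a ^ 2 ≤ A := by
    have := expect_nonneg hρ0 hρ1 (fun ξ => sq_nonneg (h ξ + -a))
    rw [expect_add_const_sq] at this
    linarith
  have hpt : ∀ ξ, h ξ ^ 2 * ψ ξ ≤ q * h ξ ^ 2 + a ^ 2 * ψ ξ + 1 / (4 * s) * (h ξ + -a) ^ 2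
      + s * (h ξ + a) ^ 2 + -(a ^ 2 * q) := fun ξ => by
    have hd : (ψ ξ - q) ^ 2 ≤ 1 := by nlinarith [hψ0 ξ, hψ1 ξ]
    have key : 4 * s * ((h ξ - a) * (h ξ + a) * (ψ ξ - q))
        ≤ (h ξ - a) ^ 2 + 4 * s ^ 2 * (h ξ + a) ^ 2 := by
      nlinarith [sq_nonneg (h ξ - a - 2 * s * (h ξ + a) * (ψ ξ - q)),
        mul_le_mul_of_nonneg_left hd (sq_nonneg (2 * s * (h ξ + a)))]
    rw [← sub_nonneg]
    have e : q * h ξ ^ 2 + a ^ 2 * ψ ξ + 1 / (4 * s) * (h ξ + -a) ^ 2 + s * (h ξ + a) ^ 2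
        + -(a ^ 2 * q) - h ξ ^ 2 * ψ ξ = ((h ξ - a) ^ 2 + 4 * s ^ 2 * (h ξ + a) ^ 2
          - 4 * s * ((h ξ - a) * (h ξ + a) * (ψ ξ - q))) / (4 * s) := by
      field_simp
      ring
    rw [e]
    exact div_nonneg (by linarith) (by positivity)
  refine (expect_mono hρ0 hρ1 hpt).trans ?_
  simp only [expect_add, expect_const_mul, expect_const, expect_add_const_sq]
  have hvar : 1 / (4 * s) * (A + 2 * -a * a + (-a) ^ 2) = (A - a ^ 2) / (4 * s) := by ring
  nlinarith

end Expectation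

section Embedding

variable {ρ : ℝ} {N : ℕ}

lemma expect_condExp (B : Finset (Fin N)) (g : Config N → ℝ) :
    expect ρ (condExp ρ B g) = expect ρ g := by
  let e := Equiv.piEquivPiSubtypeProd (· ∈ B) (fun _ : Fin N => Bool)
  let W : (B → Bool) → ℝ := fun ζ => ∏ i, if ζ i then ρ else 1 - ρ
  let V : ({x // x ∉ B} → Bool) → ℝ := fun ξ => ∏ i, if ξ i then ρ else 1 - ρ
  have hsum : ∀ F : Config N → ℝ, ∑ η, F η = ∑ ζ, ∑ ξ, F (e.symm (ζ, ξ)) := fun F => by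
    rw [← Fintype.sum_prod_type']
    exact (e.symm.sum_comp F).symm
  have hbern : ∀ ζ ξ, bern ρ (e.symm (ζ, ξ)) = W ζ * V ξ := fun ζ ξ => by
    rw [bern, ← Fintype.prod_subtype_mul_prod_subtype (· ∈ B)]
    congr 1 <;> exact Finset.prod_congr (by ext; simp) fun i _ => by simp [e, i.2]
  have hpatch : ∀ ζ ζ' ξ,
      (fun j => if h : j ∈ B then ζ' ⟨j, h⟩ else e.symm (ζ, ξ) j) = e.symm (ζ', ξ) :=
    fun ζ ζ' ξ => funext fun j => by by_cases h : j ∈ B <;> simp [e, h]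
  calc expect ρ (condExp ρ B g)
      = ∑ ζ, ∑ ξ, W ζ * V ξ * ∑ ζ', W ζ' * g (e.symm (ζ', ξ)) := by
        rw [expect_eq_sum, hsum]
        simp only [hbern, condExp, hpatch]
        rfl
    _ = (∑ ζ, W ζ) * ∑ ξ, ∑ ζ', V ξ * W ζ' * g (e.symm (ζ', ξ)) := by
        rw [Finset.sum_mul]
        refine Finset.sum_congr rfl fun ζ _ => ?_
        simp only [Finset.mul_sum]
        exact Finset.sum_congr rfl fun _ _ => Finset.sum_congr rfl fun _ _ => by ring
    _ = expect ρ g := by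
        rw [sum_prod_bernoulli, one_mul, Finset.sum_comm, expect_eq_sum, hsum]
        simp only [hbern, mul_comm (V _)]

def siteIco (N a c : ℕ) : Finset (Fin N) :=
  Finset.univ.filter fun x => a ≤ x.1 ∧ x.1 < c

lemma mem_siteIco {a c : ℕ} {x : Fin N} : x ∈ siteIco N a c ↔ a ≤ x.1 ∧ x.1 < c := by
  simp [siteIco]

def embed (a c : ℕ) (η : Config N) (ξ : Config (c - a)) : Config N :=
  fun x => if h : a ≤ x.1 ∧ x.1 < c then ξ ⟨x.1 - a, by omega⟩ else η x

variable {a c : ℕ} {η : Config N} {ξ : Config (c - a)}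

lemma embed_apply_add (j : Fin (c - a)) (h : a + j.1 < N) : embed a c η ξ ⟨a + j.1, h⟩ = ξ j := by
  have := j.2
  rw [embed, dif_pos (show a ≤ a + j.1 ∧ a + j.1 < c by omega)]
  congr 1
  ext
  simp

lemma embed_apply_of_not_mem {x : Fin N} (hx : ¬(a ≤ x.1 ∧ x.1 < c)) : embed a c η ξ x = η x :=
  dif_neg hx

lemma embed_apply_congr (η' : Config N) {x : Fin N} (hx : a ≤ x.1 ∧ x.1 < c) :
    embed a c η ξ x = embed a c η' ξ x := by
  rw [embed, embed, dif_pos hx, dif_pos hx]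

def siteIcoEquiv (hc : c ≤ N) : Fin (c - a) ≃ siteIco N a c where
  toFun j := ⟨⟨a + j.1, by omega⟩, mem_siteIco.2 ⟨by simp, by simp; omega⟩⟩
  invFun x := ⟨x.1.1 - a, by have := mem_siteIco.1 x.2; omega⟩
  left_inv j := by ext; simp
  right_inv x := by ext; simp; have := mem_siteIco.1 x.2; omega

lemma condExp_siteIco (hc : c ≤ N) (g : Config N → ℝ) (η : Config N) :
    condExp ρ (siteIco N a c) g η = expect ρ (fun ξ : Config (c - a) => g (embed a c η ξ)) := by
  let e := siteIcoEquiv (a := a) hc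
  rw [condExp, expect_eq_sum]
  refine Fintype.sum_equiv (Equiv.arrowCongr e (Equiv.refl Bool)).symm _ _ fun ζ => ?_
  have harg : (Equiv.arrowCongr e (Equiv.refl Bool)).symm ζ = fun j => ζ (e j) := by
    funext j; simp [Equiv.arrowCongr]
  rw [harg, bern, ← e.prod_comp (fun x => if ζ x then ρ else 1 - ρ)]
  congr 2
  funext x
  by_cases hx : x ∈ siteIco N a c
  · have hxa := mem_siteIco.1 hx
    rw [dif_pos hx, embed, dif_pos hxa]
    congr 1
    ext
    simp [e, siteIcoEquiv]
    omega
  · rw [dif_neg hx, embed_apply_of_not_mem (mt mem_siteIco.2 hx)]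

lemma expect_eq_expect_embed (hc : c ≤ N) (g : Config N → ℝ) :
    expect ρ g = expect ρ (fun η => expect ρ (fun ξ : Config (c - a) => g (embed a c η ξ))) := by
  rw [← expect_condExp (siteIco N a c) g]
  exact congrArg _ (funext (condExp_siteIco hc g))

lemma expect_mul_eq_expect_embed (hc : c ≤ N) {Θ : Config N → ℝ} (g : Config N → ℝ)
    (hΘ : ∀ η ξ, Θ (embed a c η ξ) = Θ η) :
    expect ρ (fun η => Θ η * g η)
      = expect ρ (fun η => Θ η * expect ρ (fun ξ : Config (c - a) => g (embed a c η ξ))) := by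
  rw [expect_eq_expect_embed (a := a) hc]
  simp only [hΘ, expect_const_mul]

lemma expect_embed_eq_expect (hc : c ≤ N) {χ : Config N → ℝ}
    (hχ : ∀ η η' ξ, χ (embed a c η ξ) = χ (embed a c η' ξ)) (η : Config N) :
    expect ρ (fun ξ : Config (c - a) => χ (embed a c η ξ)) = expect ρ χ := by
  rw [expect_eq_expect_embed (a := a) hc χ]
  simp only [hχ _ η, expect_const]

end Embedding

section Rates

variable {ρ : ℝ} {N : ℕ} {η : Config N} {bl br : ℝ} {k : ℕ}

lemma occAt_zero : occAt η bl br 0 = bl := rfl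

lemma occAt_of_succ_eq (x : Fin N) (hx : x.1 + 1 = k) : occAt η bl br k = if η x then 1 else 0 := by
  subst hx
  rw [occAt, dif_neg (by omega), dif_pos (by omega)]
  rfl

lemma occAt_of_lt (hk : N < k) : occAt η bl br k = br := by
  rw [occAt, dif_neg (by omega), dif_neg (by omega)]

lemma occAt_left_congr (bl' : ℝ) (hk : k ≠ 0) : occAt η bl br k = occAt η bl' br k := by
  simp [occAt, hk]

lemma occAt_nonneg (hbl : 0 ≤ bl) (hbr : 0 ≤ br) (k : ℕ) : 0 ≤ occAt η bl br k := by
  unfold occAt; split_ifs <;> norm_num [hbl, hbr]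

lemma occAt_le_one (hbl : bl ≤ 1) (hbr : br ≤ 1) (k : ℕ) : occAt η bl br k ≤ 1 := by
  unfold occAt; split_ifs <;> norm_num [hbl, hbr]

lemma constr_nonneg (m : KCM) (η : Config N) (i : Fin N) : 0 ≤ constr m η i := by
  have h0 := fun (bl : ℝ) (hbl : 0 ≤ bl) k => occAt_nonneg (η := η) hbl le_rfl k
  have h1 := fun (bl : ℝ) (hbl : bl ≤ 1) k => occAt_le_one (η := η) hbl zero_le_one k
  cases m
  · exact sub_nonneg.2 (h1 0 zero_le_one _)
  · exact sub_nonneg.2 (mul_le_one₀ (h1 0 zero_le_one _) (h0 0 le_rfl _) (h1 0 zero_le_one _))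
  · exact sub_nonneg.2 (mul_le_one₀ (h1 1 le_rfl _) (h0 1 zero_le_one _) (h1 1 le_rfl _))

lemma flipRate_nonneg (hρ0 : 0 ≤ ρ) (hρ1 : ρ ≤ 1) (b : Bool) : 0 ≤ if b then 1 - ρ else ρ := by
  split_ifs <;> linarith

lemma crate_nonneg (hρ0 : 0 ≤ ρ) (hρ1 : ρ ≤ 1) (m : KCM) (η : Config N) (i : Fin N) :
    0 ≤ crate m ρ η i :=
  mul_nonneg (constr_nonneg m η i) (flipRate_nonneg hρ0 hρ1 _)

variable {a c : ℕ} {ξ : Config (c - a)}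

lemma occAt_embed (bl' br' : ℝ) (j : Fin (c - a)) (hc : c ≤ N) :
    occAt ξ bl br (j.1 + 1) = occAt (embed a c η ξ) bl' br' (a + j.1 + 1) := by
  have := j.2
  rw [occAt_of_succ_eq j rfl, occAt_of_succ_eq ⟨a + j.1, by omega⟩ rfl, embed_apply_add]

lemma occAt_embed_of_lt (hk : c < k) : occAt (embed a c η ξ) bl br k = occAt η bl br k := by
  by_cases hkN : k ≤ N
  · rw [occAt_of_succ_eq ⟨k - 1, by omega⟩ (by simp; omega),
      occAt_of_succ_eq ⟨k - 1, by omega⟩ (by simp; omega), embed_apply_of_not_mem (by simp; omega)]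
  · rw [occAt_of_lt (by omega), occAt_of_lt (by omega)]

lemma occAt_embed_right (hc : c ≤ N) (hbc : occAt η 0 0 (c + 1) = 0) (bl' : ℝ) (j : Fin (c - a)) :
    occAt ξ bl 0 (j.1 + 2) = occAt (embed a c η ξ) bl' 0 (a + j.1 + 2) := by
  have := j.2
  by_cases hj : j.1 + 1 < c - a
  · exact occAt_embed bl' 0 ⟨j.1 + 1, hj⟩ hc
  · rw [occAt_of_lt (by omega), show a + j.1 + 2 = c + 1 by omega, occAt_embed_of_lt (by omega),
      occAt_left_congr 0 (by omega), hbc]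

lemma occAt_embed_left_le (hc : c ≤ N) (hbl1 : bl ≤ 1) (j : Fin (c - a)) :
    occAt (embed a c η ξ) bl 0 (a + j.1) ≤ occAt ξ 1 0 j.1 := by
  by_cases hj : j.1 = 0
  · rw [hj, occAt_zero]
    exact occAt_le_one hbl1 zero_le_one _
  · have := j.2
    have h := occAt_embed (a := a) (ξ := ξ) (η := η) (bl := 1) (br := 0) bl 0 ⟨j.1 - 1, by omega⟩ hc
    simp only [show j.1 - 1 + 1 = j.1 by omega, show a + (j.1 - 1) + 1 = a + j.1 by omega] at h
    exact h.ge

/-- The window's empty right boundary is matched by the empty site `c` of the box, and its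
occupied left boundary only makes the constraint stricter. -/
lemma constr_gapModel_le (m : KCM) (hc : c ≤ N) (hbc : occAt η 0 0 (c + 1) = 0)
    (j : Fin (c - a)) (hj : a + j.1 < N) :
    constr (gapModel m) ξ j ≤ constr m (embed a c η ξ) ⟨a + j.1, hj⟩ := by
  have hR := fun bl bl' => occAt_embed_right (ξ := ξ) (bl := bl) hc hbc bl' j
  have hR0 := occAt_nonneg (η := embed a c η ξ) zero_le_one le_rfl (a + j.1 + 2)
  cases m
  · exact (sub_le_sub_left (hR 0 0).ge 1)
  · show 1 - occAt ξ 1 0 j.1 * occAt ξ 1 0 (j.1 + 2)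
      ≤ 1 - occAt (embed a c η ξ) 0 0 (a + j.1) * occAt (embed a c η ξ) 0 0 (a + j.1 + 2)
    rw [hR 1 0, occAt_left_congr (η := embed a c η ξ) 1 (by omega)]
    exact sub_le_sub_left (mul_le_mul_of_nonneg_right
      (occAt_embed_left_le hc zero_le_one j) hR0) 1
  · show 1 - occAt ξ 1 0 j.1 * occAt ξ 1 0 (j.1 + 2)
      ≤ 1 - occAt (embed a c η ξ) 1 0 (a + j.1) * occAt (embed a c η ξ) 1 0 (a + j.1 + 2)
    rw [hR 1 1]
    exact sub_le_sub_left (mul_le_mul_of_nonneg_right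
      (occAt_embed_left_le hc le_rfl j) hR0) 1

lemma crate_gapModel_le (hρ0 : 0 ≤ ρ) (hρ1 : ρ ≤ 1) (m : KCM) (hc : c ≤ N)
    (hbc : occAt η 0 0 (c + 1) = 0) (j : Fin (c - a)) (hj : a + j.1 < N) :
    crate (gapModel m) ρ ξ j ≤ crate m ρ (embed a c η ξ) ⟨a + j.1, hj⟩ := by
  rw [crate, crate, embed_apply_add]
  exact mul_le_mul_of_nonneg_right (constr_gapModel_le m hc hbc j hj) (flipRate_nonneg hρ0 hρ1 _)

end Rates

section Dirichlet

variable {ρ : ℝ} {N : ℕ}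

noncomputable def dirichletDensity (m : KCM) (ρ : ℝ) (g : Config N → ℝ) (s : Finset (Fin N))
    (η : Config N) : ℝ :=
  ∑ i ∈ s, crate m ρ η i * (g (flipAt η i) - g η) ^ 2

lemma dirichlet_eq_expect_dirichletDensity (m : KCM) (g : Config N → ℝ) :
    dirichlet m ρ g = expect ρ (dirichletDensity m ρ g Finset.univ) :=
  (expect_sum _ _).symm

lemma dirichletDensity_mono (hρ0 : 0 ≤ ρ) (hρ1 : ρ ≤ 1) (m : KCM) (g : Config N → ℝ)
    {s t : Finset (Fin N)} (hst : s ⊆ t) (η : Config N) :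
    dirichletDensity m ρ g s η ≤ dirichletDensity m ρ g t η :=
  Finset.sum_le_sum_of_subset_of_nonneg hst fun i _ _ =>
    mul_nonneg (crate_nonneg hρ0 hρ1 m η i) (sq_nonneg _)

lemma dirichletDensity_nonneg (hρ0 : 0 ≤ ρ) (hρ1 : ρ ≤ 1) (m : KCM) (g : Config N → ℝ)
    (s : Finset (Fin N)) (η : Config N) : 0 ≤ dirichletDensity m ρ g s η := by
  simpa [dirichletDensity] using dirichletDensity_mono hρ0 hρ1 m g (Finset.empty_subset s) η

lemma dirichletDensity_siteIco_add (m : KCM) (g : Config N → ℝ) {a b c : ℕ} (hab : a ≤ b)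
    (hbc : b ≤ c) (η : Config N) :
    dirichletDensity m ρ g (siteIco N a c) η
      = dirichletDensity m ρ g (siteIco N a b) η + dirichletDensity m ρ g (siteIco N b c) η := by
  have hunion : siteIco N a c = siteIco N a b ∪ siteIco N b c := by
    ext x
    simp only [Finset.mem_union, mem_siteIco]
    omega
  have hdisj : Disjoint (siteIco N a b) (siteIco N b c) :=
    Finset.disjoint_left.2 fun x hx hx' => by
      rw [mem_siteIco] at hx hx'
      omega
  rw [dirichletDensity, hunion, Finset.sum_union hdisj]
  rfl

lemma embed_flipAt {a c : ℕ} (η : Config N) (ξ : Config (c - a)) (j : Fin (c - a))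
    (hj : a + j.1 < N) : embed a c η (flipAt ξ j) = flipAt (embed a c η ξ) ⟨a + j.1, hj⟩ := by
  funext x
  by_cases hx : a ≤ x.1 ∧ x.1 < c
  · have hxj : x = ⟨a + j.1, hj⟩ ↔ (⟨x.1 - a, by omega⟩ : Fin (c - a)) = j := by
      simp only [Fin.ext_iff]
      omega
    rw [embed, dif_pos hx, flipAt, flipAt, Function.update_apply, Function.update_apply]
    by_cases hxa : x = ⟨a + j.1, hj⟩
    · rw [if_pos (hxj.1 hxa), if_pos hxa, embed_apply_add]
    · rw [if_neg (mt hxj.2 hxa), if_neg hxa, embed, dif_pos hx]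
  · have hxa : x ≠ ⟨a + j.1, hj⟩ := fun h => hx (by subst h; simp; omega)
    rw [embed_apply_of_not_mem hx, flipAt, Function.update_of_ne hxa, embed_apply_of_not_mem hx]

lemma dirichletDensity_gapModel_le (hρ0 : 0 ≤ ρ) (hρ1 : ρ ≤ 1) (m : KCM) {a c : ℕ} (hc : c ≤ N)
    {η : Config N} (hbc : occAt η 0 0 (c + 1) = 0) (g : Config N → ℝ) (ξ : Config (c - a)) :
    dirichletDensity (gapModel m) ρ (fun ξ => g (embed a c η ξ)) Finset.univ ξ
      ≤ dirichletDensity m ρ g (siteIco N a c) (embed a c η ξ) := by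
  rw [dirichletDensity, dirichletDensity, ← Finset.sum_coe_sort (siteIco N a c),
    ← (siteIcoEquiv (a := a) hc).sum_comp]
  refine Finset.sum_le_sum fun j _ => ?_
  have hj : a + j.1 < N := by omega
  rw [embed_flipAt η ξ j hj]
  exact mul_le_mul_of_nonneg_right (crate_gapModel_le hρ0 hρ1 m hc hbc j hj) (sq_nonneg _)

end Dirichlet

section WindowEstimate

variable {ρ : ℝ} {N : ℕ}

lemma mul_expect_sq_mul_le (hρ0 : 0 ≤ ρ) (hρ1 : ρ ≤ 1) {M : ℕ} (h ψ : Config M → ℝ)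
    (hψ0 : ∀ ξ, 0 ≤ ψ ξ) (hψ1 : ∀ ξ, ψ ξ ≤ 1) {q S t γ D : ℝ} (hψq : expect ρ ψ ≤ q)
    (hS : 0 < S) (ht : 0 < t) (hγ : 0 < γ)
    (hgap : S * (expect ρ (fun ξ => h ξ ^ 2) - expect ρ h ^ 2) ≤ D) :
    γ * expect ρ (fun ξ => h ξ ^ 2 * ψ ξ)
      ≤ (γ * q + 2 * γ ^ 2 / (S * t)) * expect ρ (fun ξ => h ξ ^ 2) + t / 2 * D := by
  set A := expect ρ (fun ξ => h ξ ^ 2)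
  set s := γ / (2 * S * t)
  have hA : 0 ≤ A := expect_nonneg hρ0 hρ1 fun ξ => sq_nonneg (h ξ)
  calc γ * expect ρ (fun ξ => h ξ ^ 2 * ψ ξ)
      ≤ γ * (A * expect ρ ψ + 4 * s * A + (A - expect ρ h ^ 2) / (4 * s)) :=
        mul_le_mul_of_nonneg_left (expect_sq_mul_le hρ0 hρ1 h ψ hψ0 hψ1 (by positivity)) hγ.le
    _ = γ * expect ρ ψ * A + 2 * γ ^ 2 / (S * t) * A
          + t / 2 * (S * (A - expect ρ h ^ 2)) := by
        simp only [s]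
        field_simp
        ring
    _ ≤ γ * q * A + 2 * γ ^ 2 / (S * t) * A + t / 2 * D := by gcongr
    _ = (γ * q + 2 * γ ^ 2 / (S * t)) * A + t / 2 * D := by ring

theorem window_estimate (hρ0 : 0 ≤ ρ) (hρ1 : ρ ≤ 1) (m : KCM) {S t γ q : ℝ} (hS : 0 < S)
    (ht : 0 < t) (hγ : 0 < γ)
    (hgap : ∀ (M : ℕ) (g : Config M → ℝ),
      S * (expect ρ (fun σ => g σ ^ 2) - (expect ρ g) ^ 2) ≤ dirichlet (gapModel m) ρ g)
    {a c : ℕ} (hc : c ≤ N) {f χ Θ : Config N → ℝ} (hf : ∀ η, 0 ≤ f η)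
    (hχ0 : ∀ η, 0 ≤ χ η) (hχ1 : ∀ η, χ η ≤ 1) (hχq : expect ρ χ ≤ q)
    (hχ : ∀ η η' ξ, χ (embed a c η ξ) = χ (embed a c η' ξ))
    (hΘ0 : ∀ η, 0 ≤ Θ η) (hΘ : ∀ η ξ, Θ (embed a c η ξ) = Θ η)
    (hΘc : ∀ η, Θ η ≠ 0 → occAt η 0 0 (c + 1) = 0) :
    γ * expect ρ (fun η => Θ η * (f η * χ η))
      ≤ (γ * q + 2 * γ ^ 2 / (S * t)) * expect ρ (fun η => Θ η * f η)
        + t / 2 * expect ρ (fun η =>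
            Θ η * dirichletDensity m ρ (fun σ => √(f σ)) (siteIco N a c) η) := by
  simp only [expect_mul_eq_expect_embed (a := a) hc (fun η => f η * χ η) hΘ,
    expect_mul_eq_expect_embed (a := a) hc f hΘ,
    expect_mul_eq_expect_embed (a := a) hc (dirichletDensity m ρ (fun σ => √(f σ)) _) hΘ]
  rw [← expect_const_mul γ, ← expect_const_mul (γ * q + 2 * γ ^ 2 / (S * t)),
    ← expect_const_mul (t / 2), ← expect_add]
  refine expect_mono hρ0 hρ1 fun η => ?_
  rcases eq_or_ne (Θ η) 0 with h0 | hne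
  · simp [h0]
  have hgapη : S * (expect ρ (fun ξ : Config (c - a) => √(f (embed a c η ξ)) ^ 2)
        - expect ρ (fun ξ : Config (c - a) => √(f (embed a c η ξ))) ^ 2)
      ≤ expect ρ (fun ξ : Config (c - a) =>
          dirichletDensity m ρ (fun σ => √(f σ)) (siteIco N a c) (embed a c η ξ)) := by
    refine (hgap _ _).trans ?_
    rw [dirichlet_eq_expect_dirichletDensity]
    exact expect_mono hρ0 hρ1
      (dirichletDensity_gapModel_le hρ0 hρ1 m hc (hΘc η hne) (fun σ => √(f σ)))
  have hlocal := mul_expect_sq_mul_le hρ0 hρ1 _ _ (fun ξ => hχ0 (embed a c η ξ))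
    (fun ξ => hχ1 (embed a c η ξ)) ((expect_embed_eq_expect hc hχ η).trans_le hχq) hS ht hγ hgapη
  simp only [Real.sq_sqrt (hf _)] at hlocal
  calc γ * (Θ η * expect ρ fun ξ => f (embed a c η ξ) * χ (embed a c η ξ))
      = Θ η * (γ * expect ρ fun ξ => f (embed a c η ξ) * χ (embed a c η ξ)) := by ring
    _ ≤ Θ η * ((γ * q + 2 * γ ^ 2 / (S * t)) * expect ρ (fun ξ => f (embed a c η ξ))
          + t / 2 * expect ρ (fun ξ =>
              dirichletDensity m ρ (fun σ => √(f σ)) (siteIco N a c) (embed a c η ξ))) :=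
        mul_le_mul_of_nonneg_left hlocal (hΘ0 η)
    _ = _ := by ring

end WindowEstimate

section Blocks

variable {ρ : ℝ} {N : ℕ} {η η' : Config N}

lemma occAt_congr {bl br : ℝ} {k : ℕ} (h : ∀ x : Fin N, x.1 + 1 = k → η x = η' x) :
    occAt η bl br k = occAt η' bl br k := by
  by_cases hk : k ≠ 0 ∧ k ≤ N
  · rw [occAt_of_succ_eq ⟨k - 1, by omega⟩ (by simp; omega),
      occAt_of_succ_eq ⟨k - 1, by omega⟩ (by simp; omega), h _ (by simp; omega)]
  · unfold occAt
    split_ifs <;> first | rfl | omega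

lemma blockAct_congr (m : KCM) {K b : ℕ}
    (hag : ∀ x : Fin N, b * K ≤ x.1 → x.1 < (b + 1) * K → η x = η' x) :
    blockAct m ρ K b η = blockAct m ρ K b η' := by
  have hbK : (b + 1) * K = b * K + K := by ring
  have hocc : ∀ bl br k, b * K < k → k ≤ (b + 1) * K → occAt η bl br k = occAt η' bl br k :=
    fun bl br k h1 h2 => occAt_congr fun x hx => hag x (by omega) (by omega)
  refine Finset.sum_congr rfl fun j hj => ?_
  have hj' : j + 1 < K ∧ (m = KCM.east ∨ 0 < j) := by
    cases m <;> simp only [interiorIdx, Finset.mem_range, Finset.mem_Ioo] at hj <;> simp <;> omega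
  unfold crateNat
  split_ifs with h
  · rw [crate, crate, hag ⟨_, h⟩ (by simp) (by simp; omega)]
    congr 1
    cases m
    · exact congrArg (1 - ·) (hocc 0 0 _ (by simp; omega) (by simp; omega))
    · have := hj'.2.resolve_left (by simp)
      exact congrArg (1 - ·) (congrArg₂ (· * ·) (hocc 0 0 _ (by simp; omega) (by simp; omega))
        (hocc 0 0 _ (by simp; omega) (by simp; omega)))
    · have := hj'.2.resolve_left (by simp)
      exact congrArg (1 - ·) (congrArg₂ (· * ·) (hocc 1 0 _ (by simp; omega) (by simp; omega))
        (hocc 1 0 _ (by simp; omega) (by simp; omega)))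
  · rfl

lemma indE_congr (m : KCM) (ε : ℝ) {K b : ℕ}
    (hag : ∀ x : Fin N, b * K ≤ x.1 → x.1 < (b + 1) * K → η x = η' x) :
    indE m ρ ε K η b = indE m ρ ε K η' b := by
  have hfull : blockFull K b η ↔ blockFull K b η' :=
    forall_congr' fun x => imp_congr_right fun h1 => imp_congr_right fun h2 => by rw [hag x h1 h2]
  have hdens : blockDens K b η = blockDens K b η' := by
    have hbK : (b + 1) * K = b * K + K := by ring
    unfold blockDens
    congr 1
    exact Finset.sum_congr rfl fun j hj => occAt_congr fun x hx => by
      rw [Finset.mem_range] at hj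
      exact hag x (by omega) (by omega)
  have hlabel : label m ρ ε K η b = label m ρ ε K η' b := by
    unfold label
    rw [blockAct_congr m hag, hdens]
    exact if_congr hfull rfl rfl
  rw [indE, indE, hlabel]

lemma indE_nonneg (m : KCM) (ε : ℝ) (K : ℕ) (η : Config N) (b : ℕ) : 0 ≤ indE m ρ ε K η b := by
  unfold indE; split_ifs <;> norm_num

lemma indE_le_one (m : KCM) (ε : ℝ) (K : ℕ) (η : Config N) (b : ℕ) : indE m ρ ε K η b ≤ 1 := by
  unfold indE; split_ifs <;> norm_num

noncomputable def lastEmptyInd (e : ℕ) (z : Fin N) (η : Config N) : ℝ :=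
  if η z = false ∧ ∀ x : Fin N, z < x → x.1 < e → η x = true then 1 else 0

lemma lastEmptyInd_nonneg (e : ℕ) (z : Fin N) (η : Config N) : 0 ≤ lastEmptyInd e z η := by
  unfold lastEmptyInd; split_ifs <;> norm_num

lemma lastEmptyInd_embed {a e : ℕ} (z : Fin N) (η : Config N) (ξ : Config (z.1 - a)) :
    lastEmptyInd e z (embed a z.1 η ξ) = lastEmptyInd e z η := by
  have hout : ∀ x : Fin N, z ≤ x → embed a z.1 η ξ x = η x := fun x hx =>
    embed_apply_of_not_mem fun h => absurd h.2 (not_lt.2 hx)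
  unfold lastEmptyInd
  rw [hout z le_rfl]
  exact if_congr (and_congr_right' (forall_congr' fun x =>
    forall_congr' fun hx => by rw [hout x hx.le])) rfl rfl

lemma occAt_eq_zero_of_lastEmptyInd_ne_zero {e : ℕ} {z : Fin N} (h : lastEmptyInd e z η ≠ 0) :
    occAt η 0 0 (z.1 + 1) = 0 := by
  unfold lastEmptyInd at h
  split_ifs at h with hz
  · simp [occAt_of_succ_eq z rfl, hz.1]
  · exact absurd rfl h

lemma sum_lastEmptyInd_le_one {e : ℕ} {s : Finset (Fin N)} (hs : ∀ z ∈ s, z.1 < e) (η : Config N) :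
    ∑ z ∈ s, lastEmptyInd e z η ≤ 1 := by
  unfold lastEmptyInd
  rw [Finset.sum_boole, Nat.cast_le_one]
  refine Finset.card_le_one.2 fun z hz z' hz' => ?_
  rw [Finset.mem_filter] at hz hz'
  by_contra hne
  rcases lt_or_gt_of_ne hne with h | h
  · simp [hz.2.2 z' h (hs z' hz'.1)] at hz'
  · simp [hz'.2.2 z h (hs z hz.1)] at hz

lemma sum_expect_lastEmptyInd_mul_le (hρ0 : 0 ≤ ρ) (hρ1 : ρ ≤ 1) {e : ℕ} {s : Finset (Fin N)}
    (hs : ∀ z ∈ s, z.1 < e) {g : Fin N → Config N → ℝ} {G : Config N → ℝ} (hG : ∀ η, 0 ≤ G η)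
    (hgG : ∀ z ∈ s, ∀ η, g z η ≤ G η) :
    ∑ z ∈ s, expect ρ (fun η => lastEmptyInd e z η * g z η) ≤ expect ρ G := by
  rw [← expect_sum]
  refine expect_mono hρ0 hρ1 fun η => ?_
  calc ∑ z ∈ s, lastEmptyInd e z η * g z η ≤ ∑ z ∈ s, lastEmptyInd e z η * G η :=
        Finset.sum_le_sum fun z hz =>
          mul_le_mul_of_nonneg_left (hgG z hz η) (lastEmptyInd_nonneg e z η)
    _ ≤ G η := by
        rw [← Finset.sum_mul]
        exact mul_le_of_le_one_left (hG η) (sum_lastEmptyInd_le_one hs η)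

lemma indZ_le_sum_lastEmptyInd (K b : ℕ) (η : Config N) :
    indZ K η b ≤ ∑ z ∈ blockSet N K b, lastEmptyInd ((b + 1) * K) z η := by
  unfold indZ
  split_ifs with hZ
  swap
  · exact Finset.sum_nonneg fun z _ => lastEmptyInd_nonneg _ z η
  obtain ⟨x, hx1, hx2, hx⟩ := hZ
  let E := (blockSet N K b).filter (η · = false)
  have hxE : x ∈ E := by simp [E, blockSet, hx1, hx2, hx]
  obtain ⟨hzB, hz⟩ := Finset.mem_filter.1 (Finset.max'_mem E ⟨x, hxE⟩)
  refine le_of_eq_of_le ?_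
    (Finset.single_le_sum (fun z _ => lastEmptyInd_nonneg ((b + 1) * K) z η) hzB)
  refine (if_pos ⟨hz, fun y hy hye => ?_⟩).symm
  by_contra hyt
  have hyE : y ∈ E := by
    have hzB' := (Finset.mem_filter.1 hzB).2
    exact Finset.mem_filter.2
      ⟨Finset.mem_filter.2 ⟨Finset.mem_univ _, by omega, by omega⟩, by simpa using hyt⟩
  exact absurd (E.le_max' y hyE) (not_le.2 hy)

end Blocks

section BlockEstimates

variable {ρ : ℝ} {N : ℕ}

theorem interior_block_estimate (hρ0 : 0 ≤ ρ) (hρ1 : ρ ≤ 1) (m : KCM) {S t γ q ε : ℝ}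
    (hS : 0 < S) (ht : 0 < t) (hγ : 0 < γ)
    (hgap : ∀ (M : ℕ) (g : Config M → ℝ),
      S * (expect ρ (fun σ => g σ ^ 2) - (expect ρ g) ^ 2) ≤ dirichlet (gapModel m) ρ g)
    {K b : ℕ} {f : Config N → ℝ} (hf : ∀ η, 0 ≤ f η) (hf1 : expect ρ f = 1)
    (hq : expect ρ (fun η : Config N => indE m ρ ε K η b) ≤ q) :
    γ * expect ρ (fun η => f η * (indE m ρ ε K η b * indZ K η (b + 1)))
      ≤ γ * q + 2 * γ ^ 2 / (S * t) + t / 2 *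
          (expect ρ (dirichletDensity m ρ (fun σ => √(f σ)) (siteIco N (b * K) ((b + 1) * K)))
            + expect ρ (dirichletDensity m ρ (fun σ => √(f σ))
                (siteIco N ((b + 1) * K) ((b + 1 + 1) * K)))) := by
  set C := γ * q + 2 * γ ^ 2 / (S * t)
  set s := blockSet N K (b + 1)
  set T := lastEmptyInd (N := N) ((b + 1 + 1) * K)
  set d := fun z : Fin N => dirichletDensity m ρ (fun σ => √(f σ)) (siteIco N (b * K) z.1)
  set D := dirichletDensity m ρ (fun σ => √(f σ)) (siteIco N (b * K) ((b + 1 + 1) * K))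
  have hs : ∀ z ∈ s, (b + 1) * K ≤ z.1 ∧ z.1 < (b + 1 + 1) * K := fun z hz => by
    simpa [s, blockSet] using hz
  have hC : 0 ≤ C := by
    have := (expect_nonneg hρ0 hρ1 (indE_nonneg m ε K · b)).trans hq
    positivity
  have hwindow : ∀ z ∈ s, γ * expect ρ (fun η => T z η * (f η * indE m ρ ε K η b))
      ≤ C * expect ρ (fun η => T z η * f η) + t / 2 * expect ρ (fun η => T z η * d z η) :=
    fun z hz => window_estimate hρ0 hρ1 m hS ht hγ hgap (a := b * K) z.2.le hf
      (indE_nonneg m ε K · b) (indE_le_one m ε K · b) hq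
      (fun η η' ξ => indE_congr m ε fun x h1 h2 => embed_apply_congr η' ⟨h1, by linarith [hs z hz]⟩)
      (lastEmptyInd_nonneg _ z) (lastEmptyInd_embed z)
      (fun _ h => occAt_eq_zero_of_lastEmptyInd_ne_zero h)
  have hZ : ∀ η, f η * (indE m ρ ε K η b * indZ K η (b + 1))
      ≤ ∑ z ∈ s, T z η * (f η * indE m ρ ε K η b) := fun η => by
    rw [← Finset.sum_mul, mul_comm _ (f η * _), ← mul_assoc]
    exact mul_le_mul_of_nonneg_left (indZ_le_sum_lastEmptyInd K (b + 1) η)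
      (mul_nonneg (hf η) (indE_nonneg m ε K η b))
  have hs' : ∀ z ∈ s, z.1 < (b + 1 + 1) * K := fun z hz => (hs z hz).2
  have hTf : ∑ z ∈ s, expect ρ (fun η => T z η * f η) ≤ 1 :=
    (sum_expect_lastEmptyInd_mul_le hρ0 hρ1 hs' hf fun _ _ _ => le_rfl).trans_eq hf1
  have hTd : ∑ z ∈ s, expect ρ (fun η => T z η * d z η) ≤ expect ρ D :=
    sum_expect_lastEmptyInd_mul_le hρ0 hρ1 hs' (dirichletDensity_nonneg hρ0 hρ1 m _ _)
      fun z hz => dirichletDensity_mono hρ0 hρ1 m _ fun x hx => by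
        rw [mem_siteIco] at hx ⊢
        exact ⟨hx.1, hx.2.trans (hs z hz).2⟩
  calc γ * expect ρ (fun η => f η * (indE m ρ ε K η b * indZ K η (b + 1)))
      ≤ ∑ z ∈ s, γ * expect ρ (fun η => T z η * (f η * indE m ρ ε K η b)) := by
        rw [← Finset.mul_sum, ← expect_sum]
        exact mul_le_mul_of_nonneg_left (expect_mono hρ0 hρ1 hZ) hγ.le
    _ ≤ ∑ z ∈ s, (C * expect ρ (fun η => T z η * f η)
          + t / 2 * expect ρ (fun η => T z η * d z η)) :=
        Finset.sum_le_sum hwindow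
    _ = C * ∑ z ∈ s, expect ρ (fun η => T z η * f η)
          + t / 2 * ∑ z ∈ s, expect ρ (fun η => T z η * d z η) := by
        rw [Finset.sum_add_distrib, Finset.mul_sum, Finset.mul_sum]
    _ ≤ C * 1 + t / 2 * expect ρ D := by gcongr
    _ = _ := by
        rw [mul_one, ← expect_add]
        congr 3
        exact funext (dirichletDensity_siteIco_add m _ (Nat.mul_le_mul_right K b.le_succ)
          (Nat.mul_le_mul_right K (b + 1).le_succ))

theorem last_block_estimate (hρ0 : 0 ≤ ρ) (hρ1 : ρ ≤ 1) (m : KCM) {S t γ q ε : ℝ}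
    (hS : 0 < S) (ht : 0 < t) (hγ : 0 < γ)
    (hgap : ∀ (M : ℕ) (g : Config M → ℝ),
      S * (expect ρ (fun σ => g σ ^ 2) - (expect ρ g) ^ 2) ≤ dirichlet (gapModel m) ρ g)
    {K b : ℕ} (hb : (b + 1) * K = N) {f : Config N → ℝ} (hf : ∀ η, 0 ≤ f η)
    (hf1 : expect ρ f = 1) (hq : expect ρ (fun η : Config N => indE m ρ ε K η b) ≤ q) :
    γ * expect ρ (fun η => f η * indE m ρ ε K η b)
      ≤ γ * q + 2 * γ ^ 2 / (S * t) + t / 2 * expect ρ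
          (dirichletDensity m ρ (fun σ => √(f σ)) (siteIco N (b * K) ((b + 1) * K))) := by
  have h := window_estimate hρ0 hρ1 m hS ht hγ hgap (a := b * K) hb.le hf
    (indE_nonneg m ε K · b) (indE_le_one m ε K · b) hq
    (fun η η' ξ => indE_congr m ε fun x h1 h2 => embed_apply_congr η' ⟨h1, h2⟩)
    (Θ := fun _ => 1) (fun _ => zero_le_one) (fun _ _ => rfl)
    (fun _ _ => occAt_of_lt (by omega))
  simpa only [one_mul, hf1, mul_one] using h

end BlockEstimates

section Assembly

variable {ρ : ℝ} {N : ℕ}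

lemma expect_mul_Vfun (m : KCM) (ε : ℝ) (K : ℕ) (f : Config N → ℝ) :
    expect ρ (fun η => f η * Vfun m ρ ε K η)
      = ∑ b ∈ Finset.range (N / K - 1),
          expect ρ (fun η => f η * (indE m ρ ε K η b * indZ K η (b + 1)))
        + expect ρ (fun η => f η * indE m ρ ε K η (N / K - 1)) := by
  simp only [Vfun, mul_add, Finset.mul_sum, expect_add, expect_sum]

lemma sum_expect_dirichletDensity_blocks (m : KCM) (g : Config N → ℝ) (K n : ℕ) :
    ∑ b ∈ Finset.range n, expect ρ (dirichletDensity m ρ g (siteIco N (b * K) ((b + 1) * K)))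
      = expect ρ (dirichletDensity m ρ g (siteIco N 0 (n * K))) := by
  induction n with
  | zero =>
    rw [Finset.sum_range_zero, ← expect_const (ρ := ρ) (N := N) 0]
    congr 1
    funext η
    simp [dirichletDensity, siteIco]
  | succ n ih =>
    rw [Finset.sum_range_succ, ih, ← expect_add]
    congr 1
    funext η
    rw [← dirichletDensity_siteIco_add m g (Nat.zero_le _) (by nlinarith)]

lemma siteIco_zero_self : siteIco N 0 N = Finset.univ := by
  ext x
  simp [mem_siteIco]

lemma sum_range_add_succ_le {D : ℕ → ℝ} (hD0 : 0 ≤ D 0) (k : ℕ) :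
    ∑ b ∈ Finset.range k, (D b + D (b + 1)) + D k ≤ 2 * ∑ b ∈ Finset.range (k + 1), D b := by
  have h1 := Finset.sum_range_succ D k
  have h2 := Finset.sum_range_succ' D k
  rw [Finset.sum_add_distrib]
  linarith

end Assembly

end KCM

theorem gaussian_bound_bad_blocks_general (ρ : ℝ) (hρ0 : 0 < ρ) (hρ1 : ρ < 1) (m : KCM)
    (K N : ℕ) (hK : 0 < K) (hN : K ≤ N) (hKN : K ∣ N)
    (ε : ℝ)
    (S : ℝ) (hS0 : 0 < S)
    (hgap : ∀ (M : ℕ) (g : Config M → ℝ),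
      S * (expect ρ (fun σ => g σ ^ 2) - (expect ρ g) ^ 2)
        ≤ dirichlet (gapModel m) ρ g)
    (mv : ℝ)
    (hmv : ∀ b ∈ Finset.range (N / K), expect ρ (fun η : Config N => indE m ρ ε K η b) ≤ mv)
    (lam γ : ℝ) (hγ : 0 < γ)
    (f : Config N → ℝ) (hf : ∀ η, 0 ≤ f η) (hf1 : expect ρ f = 1) :
    γ * expect ρ (fun η => f η * Vfun m ρ ε K η)
        - Real.exp lam * dirichlet m ρ (fun η => Real.sqrt (f η))
      ≤ ((N : ℝ) / K) * (γ * mv + 2 * γ ^ 2 / (S * Real.exp lam)) := by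
  have hρ0' := hρ0.le
  have hρ1' := hρ1.le
  obtain ⟨k, hk⟩ : ∃ k, N / K = k + 1 := Nat.exists_eq_add_of_le' ((Nat.one_le_div_iff hK).2 hN)
  have hNK : (k + 1) * K = N := hk ▸ Nat.div_mul_cancel hKN
  set t := Real.exp lam
  have ht : 0 < t := Real.exp_pos lam
  set C := γ * mv + 2 * γ ^ 2 / (S * t)
  set D := fun b : ℕ => expect ρ
    (KCM.dirichletDensity m ρ (fun σ => √(f σ)) (KCM.siteIco N (b * K) ((b + 1) * K)))
  have hint : ∀ b ∈ Finset.range k,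
      γ * expect ρ (fun η => f η * (indE m ρ ε K η b * indZ K η (b + 1)))
        ≤ C + t / 2 * (D b + D (b + 1)) := fun b hb =>
    KCM.interior_block_estimate hρ0' hρ1' m hS0 ht hγ hgap hf hf1 (hmv b (by simp at hb ⊢; omega))
  have hlast : γ * expect ρ (fun η => f η * indE m ρ ε K η k) ≤ C + t / 2 * D k :=
    KCM.last_block_estimate hρ0' hρ1' m hS0 ht hγ hgap hNK hf hf1 (hmv k (by simp [hk]))
  have hD : ∑ b ∈ Finset.range (k + 1), D b = dirichlet m ρ (fun η => √(f η)) := by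
    rw [KCM.sum_expect_dirichletDensity_blocks, hNK, KCM.siteIco_zero_self,
      KCM.dirichlet_eq_expect_dirichletDensity]
  have hdouble := KCM.sum_range_add_succ_le
    (KCM.expect_nonneg hρ0' hρ1' (KCM.dirichletDensity_nonneg hρ0' hρ1' m _ _)) k (D := D)
  have hcast : (N : ℝ) / K = k + 1 := by
    rw [← Nat.cast_div hKN (by positivity), hk, Nat.cast_succ]
  have hinterior := Finset.sum_le_sum hint
  rw [← Finset.mul_sum, Finset.sum_add_distrib, Finset.sum_const, Finset.card_range,
    nsmul_eq_mul, ← Finset.mul_sum] at hinterior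
  rw [KCM.expect_mul_Vfun, hk, Nat.add_sub_cancel, hcast, ← hD]
  nlinarith [mul_le_mul_of_nonneg_left hdouble ht.le]

/-- **Core estimate of Lemma 4.5** (Gaussian bound for the density of
non-equilibrated blocks). For the East or FA-1f model in dimension 1 at density
`ρ ∈ (0,1)`, with `K` dividing `N` and `ε` as in the definition of the
activity-density labels, assuming a uniform spectral gap lower bound `S > 0` on
finite intervals with empty right boundary condition, and with `m` an upper bound
for (hence in particular the maximum of) `ν(1_{𝓔_i})` over the blocks: for every
`λ ∈ ℝ`, `γ > 0` and every probability density `f`,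
`γ·ν(f·V) − e^λ·𝒟_N(√f) ≤ (N/K)·(γ·m + 2γ²/(S·e^λ))`. -/
theorem gaussian_bound_bad_blocks (ρ : ℝ) (hρ0 : 0 < ρ) (hρ1 : ρ < 1) (m : KCM)
    (K N : ℕ) (hK : 0 < K) (hN : K ≤ N) (hKN : K ∣ N)
    (ε : ℝ) (hε : 0 < ε) (hε1 : ρ + ε < 1)
    (hε2 : ε * K < meanAct m ρ * ((interiorIdx m K).card : ℝ))
    (S : ℝ) (hS0 : 0 < S)
    (hgap : ∀ (M : ℕ) (g : Config M → ℝ),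
      S * (expect ρ (fun σ => g σ ^ 2) - (expect ρ g) ^ 2)
        ≤ dirichlet (gapModel m) ρ g)
    (mv : ℝ)
    (hmv : ∀ b ∈ Finset.range (N / K), expect ρ (fun η : Config N => indE m ρ ε K η b) ≤ mv)
    (lam γ : ℝ) (hγ : 0 < γ)
    (f : Config N → ℝ) (hf : ∀ η, 0 ≤ f η) (hf1 : expect ρ f = 1) :
    γ * expect ρ (fun η => f η * Vfun m ρ ε K η)
        - Real.exp lam * dirichlet m ρ (fun η => Real.sqrt (f η))
      ≤ ((N : ℝ) / K) * (γ * mv + 2 * γ ^ 2 / (S * Real.exp lam)) :=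
  gaussian_bound_bad_blocks_general ρ hρ0 hρ1 m K N hK hN hKN ε S hS0 hgap mv hmv lam γ hγ f hf hf1
end

section
/- Two-dimensional Dirichlet form comparison (key step in Section 4.2). Consider the FA-1f model on the square Λ_N²={1,…,N}² at density ρ∈(0,1) with boundary condition in which all external sites (N+1,j), j=1,…,N, are empty and all other external neighbors are filled. Then for every f:{0,1}^{Λ_N²}→[0,∞): 𝒟_N^{(2)}(√f) ≥ Σ_{i=1}^N ν( 𝒟^{(1,i)}(√f) ), where 𝒟^{(1,i)}(√f) is the Dirichlet form of the one-dimensional FA-1f model with one empty (right) boundary applied to √f viewed as a function of row i (the configuration off row i held fixed), and ν integrates over the off-row variables. (This holds because the two-dimensional constraint rate at each site dominates the corresponding one-dimensional constraint rate along its row.) -/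
open Finset Filter

open scoped Classical

/-- A configuration on the square `Λ_N² = {1,…,N}²`: `η r x` is the occupation of
the site at line `r` (first coordinate) and position `x` along the line. -/
abbrev Config2 (N : ℕ) := Fin N → Fin N → Bool

/-- Bernoulli(ρ) product weight of a 2d configuration. -/
noncomputable def bern2 (ρ : ℝ) {N : ℕ} (η : Config2 N) : ℝ :=
  ∏ r, ∏ x, (if η r x then ρ else 1 - ρ)

/-- Expectation under the Bernoulli(ρ) product measure on `Λ_N²`. -/
noncomputable def expect2 (ρ : ℝ) {N : ℕ} (f : Config2 N → ℝ) : ℝ :=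
  ∑ η : Config2 N, bern2 ρ η * f η

/-- The 2d configuration flipped at the site `(r,x)`. -/
def flip2 {N : ℕ} (η : Config2 N) (r x : Fin N) : Config2 N :=
  Function.update η r (Function.update (η r) x (!η r x))

/-- Occupation at position `x` of the (1-indexed) line `k ∈ {0,…,N+1}`, the
external lines `k = 0` and `k = N+1` being filled. -/
noncomputable def lineOcc {N : ℕ} (η : Config2 N) (x : Fin N) (k : ℕ) : ℝ :=
  if hk : k = 0 then 1
  else if h : k ≤ N then (if η ⟨k - 1, by omega⟩ x then 1 else 0) else 1

/-- The 2d FA-1f constraint at the site `(r,x)`, for the boundary condition in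
which the external sites at position `N+1` of each line are empty and all other
external neighbors are filled: `r_{(r,x)}(η) = 1 − ∏(occupations of the four
neighbors)`. -/
noncomputable def constr2 {N : ℕ} (η : Config2 N) (r x : Fin N) : ℝ :=
  1 - occAt (η r) 1 0 x.1 * occAt (η r) 1 0 (x.1 + 2)
      * lineOcc η x r.1 * lineOcc η x (r.1 + 2)

/-- The 2d FA-1f jump rate `c_{(r,x)}(η)`. -/
noncomputable def crate2 (ρ : ℝ) {N : ℕ} (η : Config2 N) (r x : Fin N) : ℝ :=
  constr2 η r x * (if η r x then 1 - ρ else ρ)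

lemma occAt_mem01 {N : ℕ} (η : Config N) (k : ℕ) :
    0 ≤ occAt η 1 0 k ∧ occAt η 1 0 k ≤ 1 := by
  unfold occAt; split_ifs <;> norm_num

lemma lineOcc_mem01 {N : ℕ} (η : Config2 N) (x : Fin N) (k : ℕ) :
    0 ≤ lineOcc η x k ∧ lineOcc η x k ≤ 1 := by
  unfold lineOcc; split_ifs <;> norm_num

lemma crate_le_crate2 (ρ : ℝ) (hρ0 : 0 < ρ) (hρ1 : ρ < 1) {N : ℕ}
    (η : Config2 N) (r x : Fin N) :
    crate KCM.fa1 ρ (η r) x ≤ crate2 ρ η r x := by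
  simp only [crate, crate2, constr, constr2]
  have hrate : (0:ℝ) ≤ if η r x then 1 - ρ else ρ := by
    split_ifs <;> linarith
  apply mul_le_mul_of_nonneg_right _ hrate
  have h1 := occAt_mem01 (η r) x.1
  have h2 := occAt_mem01 (η r) (x.1 + 2)
  have h3 := lineOcc_mem01 η x r.1
  have h4 := lineOcc_mem01 η x (r.1 + 2)
  have hab : 0 ≤ occAt (η r) 1 0 x.1 * occAt (η r) 1 0 (x.1 + 2) :=
    mul_nonneg h1.1 h2.1
  have : occAt (η r) 1 0 x.1 * occAt (η r) 1 0 (x.1 + 2)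
      * lineOcc η x r.1 * lineOcc η x (r.1 + 2)
      ≤ occAt (η r) 1 0 x.1 * occAt (η r) 1 0 (x.1 + 2) := by
    calc occAt (η r) 1 0 x.1 * occAt (η r) 1 0 (x.1 + 2)
          * lineOcc η x r.1 * lineOcc η x (r.1 + 2)
        ≤ occAt (η r) 1 0 x.1 * occAt (η r) 1 0 (x.1 + 2) * lineOcc η x r.1 * 1 := by
          apply mul_le_mul_of_nonneg_left h4.2 (mul_nonneg hab h3.1)
      _ = occAt (η r) 1 0 x.1 * occAt (η r) 1 0 (x.1 + 2) * lineOcc η x r.1 := by ring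
      _ ≤ occAt (η r) 1 0 x.1 * occAt (η r) 1 0 (x.1 + 2) * 1 :=
          mul_le_mul_of_nonneg_left h3.2 hab
      _ = _ := by ring
  linarith

lemma bern2_nonneg (ρ : ℝ) (hρ0 : 0 < ρ) (hρ1 : ρ < 1) {N : ℕ} (η : Config2 N) :
    0 ≤ bern2 ρ η := by
  unfold bern2
  exact Finset.prod_nonneg fun r _ => Finset.prod_nonneg fun x _ => by
    split_ifs <;> linarith

/-- **Two-dimensional Dirichlet form comparison** (key step in Section 4.2).
For FA-1f on `Λ_N²` with the empty boundary on the face at position `N+1` of every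
line (all other external neighbors filled): for every `f ≥ 0`,
`𝒟_N^{(2)}(√f) ≥ Σ_{i=1}^N ν(𝒟^{(1,i)}(√f))`, where `𝒟^{(1,i)}` is the Dirichlet
form of the 1d FA-1f model with one empty (right) boundary acting on line `i`,
the other lines being held fixed, and `ν` integrates over the remaining variables. -/
theorem dirichlet_2d_dominates_rows (ρ : ℝ) (hρ0 : 0 < ρ) (hρ1 : ρ < 1)
    (N : ℕ) (f : Config2 N → ℝ) (hf : ∀ η, 0 ≤ f η) :
    ∑ r : Fin N, ∑ x : Fin N, expect2 ρ (fun η =>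
        crate KCM.fa1 ρ (η r) x * (Real.sqrt (f (flip2 η r x)) - Real.sqrt (f η)) ^ 2)
      ≤ ∑ r : Fin N, ∑ x : Fin N, expect2 ρ (fun η =>
          crate2 ρ η r x * (Real.sqrt (f (flip2 η r x)) - Real.sqrt (f η)) ^ 2) := by
  refine Finset.sum_le_sum fun r _ => Finset.sum_le_sum fun x _ => ?_
  unfold expect2
  refine Finset.sum_le_sum fun η _ => ?_
  refine mul_le_mul_of_nonneg_left ?_ (bern2_nonneg ρ hρ0 hρ1 η)
  exact mul_le_mul_of_nonneg_right (crate_le_crate2 ρ hρ0 hρ1 η r x) (sq_nonneg _)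
end
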